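/- arXiv:1105.3755 — 5 statements merged into one kernel-verified Lean document; each statement's English description precedes it below -/
import Mathlib

section
/- Let $\omega$ be a positive Borel measure on $(a,b)$, $c \in (a,b)$, and $F(x) = \omega([c,x))$ for $x \in [c,b)$. Then for every $n \in \mathbb{N}$ and $x \in [c,b)$, $F(x)^{n+1} \geq (n+1) \int_{[c,x)} F(t)^n \, d\omega(t)$. -/
/-!
Let `F t = ω [c,t)` and let `μ` be `ω` restricted to `[c,x)`. Since `F` is monotone, each
superlevel set `{F > t}` is a final segment of `[c,x)`, and `ω [a,x) = F x - F a` for its points;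
hence `μ {F > t} ≤ F x - t`, i.e. the law of `F` under `μ` is dominated by the uniform law on
`[0, F x]`. For `n ≥ 1` the layer cake formula then gives
`∫ F^n dμ ≤ ∫₀^{F x} n s^(n-1) (F x - s) ds = F(x)^(n+1) / (n+1)`.
-/

open MeasureTheory Set
open scoped ENNReal

lemma integral_sub_mul_pow (M : ℝ) (m : ℕ) :
    ∫ t in (0 : ℝ)..M, (M - t) * ((m + 1) * t ^ m) = M ^ (m + 2) / (m + 2) := by
  have hexpand : ∀ t : ℝ,
      (M - t) * ((m + 1) * t ^ m) = (m + 1) * M * t ^ m - (m + 1) * t ^ (m + 1) := fun t => by ring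
  simp_rw [hexpand]
  rw [intervalIntegral.integral_sub ((continuous_pow m).intervalIntegrable _ _ |>.const_mul _)
      ((continuous_pow (m + 1)).intervalIntegrable _ _ |>.const_mul _),
    intervalIntegral.integral_const_mul, intervalIntegral.integral_const_mul, integral_pow,
    integral_pow]
  push_cast
  field_simp
  ring

section LayerCake

variable {α : Type*} [MeasurableSpace α] {μ : Measure α} {f : α → ℝ} {M : ℝ}

lemma lintegral_ofReal_pow_succ_le_of_meas_lt_le (hf_nn : 0 ≤ᵐ[μ] f) (hf : AEMeasurable f μ)
    (hM : 0 ≤ M) (htail : ∀ t, 0 < t → μ {a | t < f a} ≤ ENNReal.ofReal (M - t))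
    (m : ℕ) :
    ∫⁻ a, ENNReal.ofReal (f a ^ (m + 1)) ∂μ ≤ ENNReal.ofReal (M ^ (m + 2) / (m + 2)) := by
  set g : ℝ → ℝ := fun t => (m + 1) * t ^ m
  have hg_cont : Continuous g := by fun_prop
  have hg_primitive : ∀ y, ∫ t in (0 : ℝ)..y, g t = y ^ (m + 1) := fun y => by
    simp only [g, intervalIntegral.integral_const_mul, integral_pow]
    field_simp
    simp
  have hlayer := lintegral_comp_eq_lintegral_meas_lt_mul μ hf_nn hf
    (fun t _ => hg_cont.intervalIntegrable 0 t)
    ((ae_restrict_iff' measurableSet_Ioi).2 (ae_of_all _ fun t (ht : 0 < t) => by positivity))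
  simp only [hg_primitive] at hlayer
  have hvanish : ∫⁻ t in Ioi M, μ {a | t < f a} * ENNReal.ofReal (g t) = 0 := by
    refine setLIntegral_eq_zero measurableSet_Ioi fun t (ht : M < t) => ?_
    have hempty : μ {a | t < f a} = 0 :=
      nonpos_iff_eq_zero.1 <|
        (htail t (hM.trans_lt ht)).trans_eq (ENNReal.ofReal_of_nonpos (by linarith))
    simp [hempty]
  have hdom : ∫⁻ t in Ioc 0 M, μ {a | t < f a} * ENNReal.ofReal (g t) ≤
      ∫⁻ t in Ioc 0 M, ENNReal.ofReal ((M - t) * g t) :=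
    setLIntegral_mono (by fun_prop) fun t ht => by
      rw [ENNReal.ofReal_mul (sub_nonneg.2 ht.2)]
      gcongr
      exact htail t ht.1
  have hcompute : ∫⁻ t in Ioc 0 M, ENNReal.ofReal ((M - t) * g t) =
      ENNReal.ofReal (M ^ (m + 2) / (m + 2)) := by
    have hint : IntegrableOn (fun t => (M - t) * g t) (Ioc 0 M) :=
      (by fun_prop : Continuous fun t => (M - t) * g t).integrableOn_Ioc
    have hnn : ∀ᵐ t ∂volume.restrict (Ioc 0 M), 0 ≤ (M - t) * g t :=
      (ae_restrict_iff' measurableSet_Ioc).2 <| ae_of_all _ fun t ht => by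
        have := ht.1; have := ht.2; simp only [g]; positivity
    rw [← ofReal_integral_eq_lintegral_ofReal hint hnn, ← intervalIntegral.integral_of_le hM,
      integral_sub_mul_pow]
  rw [hlayer, ← Ioc_union_Ioi_eq_Ioi hM,
    lintegral_union measurableSet_Ioi (Ioc_disjoint_Ioi le_rfl), hvanish, add_zero, ← hcompute]
  exact hdom

lemma integral_pow_le_of_meas_lt_le (hf_nn : 0 ≤ᵐ[μ] f) (hf : AEMeasurable f μ) (hM : 0 ≤ M)
    (huniv : μ univ ≤ ENNReal.ofReal M)
    (htail : ∀ t, 0 < t → μ {a | t < f a} ≤ ENNReal.ofReal (M - t)) (n : ℕ) :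
    (n + 1 : ℝ) * ∫ a, f a ^ n ∂μ ≤ M ^ (n + 1) := by
  cases n with
  | zero =>
    simpa [integral_const, measureReal_def] using ENNReal.toReal_le_of_le_ofReal hM huniv
  | succ m =>
    have hbound : ∫ a, f a ^ (m + 1) ∂μ ≤ M ^ (m + 2) / (m + 2) := by
      rw [integral_eq_lintegral_of_nonneg_ae (hf_nn.mono fun a ha => pow_nonneg ha _)
        (hf.pow_const _).aestronglyMeasurable]
      exact ENNReal.toReal_le_of_le_ofReal (by positivity)
        (lintegral_ofReal_pow_succ_le_of_meas_lt_le hf_nn hf hM htail m)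
    push_cast
    rw [add_assoc, one_add_one_eq_two, ← le_div_iff₀' (by positivity)]
    exact hbound

end LayerCake

section DistributionFunction

variable {ω : Measure ℝ} {c x : ℝ}

lemma measure_le_of_forall_measure_Ico_le {S : Set ℝ} {m : ℝ≥0∞} (hS : S ⊆ Ico c x)
    (h : ∀ a ∈ S, ω (Ico a x) ≤ m) : ω S ≤ m := by
  rcases S.eq_empty_or_nonempty with rfl | hne
  · simp
  have hbdd : BddBelow S := ⟨c, fun a ha => (hS ha).1⟩
  by_cases hmin : sInf S ∈ S
  · have hsub : S ⊆ Ico (sInf S) x := fun a ha => ⟨csInf_le hbdd ha, (hS ha).2⟩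
    exact (measure_mono hsub).trans (h _ hmin)
  obtain ⟨u, hu_anti, hu_lim, hu_mem⟩ := exists_seq_tendsto_sInf hne hbdd
  have hcover : S ⊆ ⋃ n, Ico (u n) x := fun a ha => by
    have hlt : sInf S < a := (csInf_le hbdd ha).lt_of_ne fun h => hmin (h ▸ ha)
    obtain ⟨n, hn⟩ := (hu_lim.eventually (eventually_lt_nhds hlt)).exists
    exact mem_iUnion_of_mem n ⟨hn.le, (hS ha).2⟩
  have hmono : Monotone fun n => Ico (u n) x := fun i j hij => Ico_subset_Ico_left (hu_anti hij)
  calc ω S ≤ ω (⋃ n, Ico (u n) x) := measure_mono hcover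
    _ = ⨆ n, ω (Ico (u n) x) := hmono.measure_iUnion
    _ ≤ m := iSup_le fun n => h _ (hu_mem n)

lemma measure_setOf_lt_measure_Ico_inter_le (t : ℝ≥0∞) :
    ω ({a | t < ω (Ico c a)} ∩ Ico c x) ≤ ω (Ico c x) - t := by
  refine measure_le_of_forall_measure_Ico_le inter_subset_right ?_
  rintro a ⟨hta, hca, hax⟩
  have hsplit : ω (Ico c a) + ω (Ico a x) = ω (Ico c x) := by
    rw [← measure_union Ico_disjoint_Ico_same measurableSet_Ico, Ico_union_Ico_eq_Ico hca hax.le]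
  refine ENNReal.le_sub_of_add_le_left hta.ne_top ?_
  rw [← hsplit]
  gcongr
  exact hta.le

lemma restrict_Ico_setOf_lt_toReal_le (hx : ω (Ico c x) ≠ ∞) {t : ℝ} (ht : 0 ≤ t) :
    ω.restrict (Ico c x) {a | t < (ω (Ico c a)).toReal} ≤
      ENNReal.ofReal ((ω (Ico c x)).toReal - t) := by
  rw [Measure.restrict_apply' measurableSet_Ico, ENNReal.ofReal_sub _ ht, ENNReal.ofReal_toReal hx]
  refine le_trans (measure_mono ?_) (measure_setOf_lt_measure_Ico_inter_le (ENNReal.ofReal t))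
  rintro a ⟨hta, ha⟩
  refine ⟨?_, ha⟩
  have hfin : ω (Ico c a) ≠ ∞ :=
    ne_top_of_le_ne_top hx (measure_mono (Ico_subset_Ico_right ha.2.le))
  exact (ENNReal.ofReal_lt_iff_lt_toReal ht hfin).2 hta

end DistributionFunction

theorem stmt1_general (b c : ℝ) (ω : Measure ℝ)
    (hfin : ∀ x ∈ Set.Ico c b, ω (Set.Ico c x) ≠ ⊤) :
    ∀ (n : ℕ), ∀ x ∈ Set.Ico c b,
      (n + 1 : ℝ) * ∫ t in Set.Ico c x, ((ω (Set.Ico c t)).toReal) ^ n ∂ω ≤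
        ((ω (Set.Ico c x)).toReal) ^ (n + 1) := by
  intro n x hx
  have hF_mono : Monotone fun t => ω (Ico c t) := fun s t hst =>
    measure_mono (Ico_subset_Ico_right hst)
  refine integral_pow_le_of_meas_lt_le (ae_of_all _ fun _ => ENNReal.toReal_nonneg)
    hF_mono.measurable.ennreal_toReal.aemeasurable ENNReal.toReal_nonneg ?_
    (fun t ht => restrict_Ico_setOf_lt_toReal_le (hfin x hx) ht.le) n
  rw [Measure.restrict_apply_univ, ENNReal.ofReal_toReal (hfin x hx)]

/-- For the distribution function `F x = ω [c,x)` one has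
`F(x)^(n+1) ≥ (n+1) ∫_{[c,x)} F(t)^n dω(t)`. -/
theorem stmt1 (a b c : ℝ) (ω : Measure ℝ) (hc : c ∈ Set.Ioo a b)
    (hfin : ∀ x ∈ Set.Ico c b, ω (Set.Ico c x) ≠ ⊤) :
    ∀ (n : ℕ), ∀ x ∈ Set.Ico c b,
      (n + 1 : ℝ) * ∫ t in Set.Ico c x, ((ω (Set.Ico c t)).toReal) ^ n ∂ω ≤
        ((ω (Set.Ico c x)).toReal) ^ (n + 1) :=
  stmt1_general b c ω hfin
end

section
/- Let $\omega$ be a positive Borel measure on $(a,b)$, $M: (a,b) \to \mathbb{C}^{n\times n}$ with $\|M(\cdot)\| \in L^1_{loc}((a,b);\omega)$, and suppose $I + \omega(\{x\}) M(x)$ is invertible for all $x \in (a,b)$. Then for each $c \in (a,b)$ and $Y_c \in \mathbb{C}^n$, the homogeneous integral equation $Y(x) = Y_c + \int_c^x M(t) Y(t)\, d\omega(t)$ has at most one solution on $(a,b)$. -/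
/-!
Put `Z = Y₁ - Y₂`, so that `Z x = ∫_c^x M Z dω` and `‖M Z‖ ≤ g ‖Z‖` with `g = ∑ᵢⱼ ‖Mᵢⱼ‖` locally
integrable. Vanishing of `Z` spreads out from `c` by real induction, in both directions.

Every step uses the same contraction estimate: if `‖Z t‖ ≤ K ∫_J ‖M Z‖` on an interval `J` with
`K ∫_J g < 1`, then `∫_J ‖M Z‖ ≤ (K ∫_J g) ∫_J ‖M Z‖` forces `Z = 0` on `J`; such short intervals
exist on either side of any point because `∫_{(x, x')} g → 0` as `x' → x`.

To the right of `c` the intervals `[c, t)` never contain `t`, so `Z = 0` on `[c, x)` gives `Z x = 0`,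
and `K = 1` works beyond `x`. To the left, `[t, c)` contains the atom at `t`:
`Z t = -ω{t} M t Z t - ∫_{(t,c)} M Z dω`. At an endpoint this says `(1 + ω{t} M t) Z t = 0`, which is
where invertibility enters; on an interval with `∫ g < 1/2` every atom has `ω{t} g t < 1/2`, so
`‖Z t‖ ≤ 2 ∫ ‖M Z‖` and the contraction estimate applies with `K = 2`.
-/

open MeasureTheory Set

/-- The two-sided integral `∫_c^x h dω` (over `[c,x)` resp. `-∫ [x,c)`). -/
noncomputable def vInt {n : ℕ} (ω : Measure ℝ) (h : ℝ → Fin n → ℂ) (c x : ℝ) :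
    Fin n → ℂ :=
  if c ≤ x then ∫ t in Set.Ico c x, h t ∂ω else -∫ t in Set.Ico x c, h t ∂ω

open Matrix

theorem forall_mem_Icc_of_induction_right {α : Type*} [ConditionallyCompleteLinearOrder α]
    {a b : α} {P : α → Prop}
    (hclosed : ∀ x ∈ Icc a b, (∀ y ∈ Ico a x, P y) → P x)
    (hopen : ∀ x ∈ Ico a b, (∀ y ∈ Icc a x, P y) → ∃ x' > x, ∀ y ∈ Ioo x x', P y) :
    ∀ x ∈ Icc a b, P x := by
  by_contra! ⟨x₀, hx₀, hPx₀⟩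
  set S := {y ∈ Icc a b | ¬P y}
  have hS : S.Nonempty := ⟨x₀, hx₀, hPx₀⟩
  have hSbdd : BddBelow S := ⟨a, fun y hy => hy.1.1⟩
  set s := sInf S
  have has : a ≤ s := le_csInf hS fun y hy => hy.1.1
  have hsx₀ : s ≤ x₀ := csInf_le hSbdd ⟨hx₀, hPx₀⟩
  have hbelow : ∀ y ∈ Ico a s, P y := fun y hy => by
    by_contra hPy
    exact hy.2.not_ge (csInf_le hSbdd ⟨⟨hy.1, hy.2.le.trans (hsx₀.trans hx₀.2)⟩, hPy⟩)
  have hPs : P s := hclosed s ⟨has, hsx₀.trans hx₀.2⟩ hbelow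
  have hsx₀' : s < x₀ := hsx₀.lt_of_ne (by rintro rfl; exact hPx₀ hPs)
  obtain ⟨x', hsx', hPx'⟩ := hopen s ⟨has, hsx₀'.trans_le hx₀.2⟩ fun y hy =>
    hy.2.eq_or_lt.elim (· ▸ hPs) fun h => hbelow y ⟨hy.1, h⟩
  obtain ⟨y, hyS, hyx'⟩ := exists_lt_of_csInf_lt hS hsx'
  rcases (csInf_le hSbdd hyS).eq_or_lt with hsy | hsy
  · exact hyS.2 (hsy ▸ hPs)
  · exact hyS.2 (hPx' y ⟨hsy, hyx'⟩)

theorem forall_mem_Icc_of_induction_left {α : Type*} [ConditionallyCompleteLinearOrder α]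
    {a b : α} {P : α → Prop}
    (hclosed : ∀ x ∈ Icc a b, (∀ y ∈ Ioc x b, P y) → P x)
    (hopen : ∀ x ∈ Ioc a b, (∀ y ∈ Icc x b, P y) → ∃ x' < x, ∀ y ∈ Ioo x' x, P y) :
    ∀ x ∈ Icc a b, P x := fun x hx =>
  forall_mem_Icc_of_induction_right (α := αᵒᵈ) (a := OrderDual.toDual b)
    (b := OrderDual.toDual a) (P := P ∘ OrderDual.ofDual)
    (fun x hx h => hclosed x ⟨hx.2, hx.1⟩ fun y hy => h y ⟨hy.2, hy.1⟩)
    (fun x hx h => by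
      obtain ⟨x', hx', hP⟩ := hopen x ⟨hx.2, hx.1⟩ fun y hy => h y ⟨hy.2, hy.1⟩
      exact ⟨x', hx', fun y hy => hP y ⟨hy.2, hy.1⟩⟩)
    x ⟨hx.2, hx.1⟩

section SetIntegral

variable {α : Type*} [MeasurableSpace α] {μ : Measure α}

theorem exists_setIntegral_lt_of_antitone {S : ℕ → Set α} (hSm : ∀ k, MeasurableSet (S k))
    (hS : Antitone S) (hS_empty : ⋂ k, S k = ∅) {g : α → ℝ} (hg : IntegrableOn g (S 0) μ)
    {ε : ℝ} (hε : 0 < ε) : ∃ k, ∫ t in S k, g t ∂μ < ε := by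
  have hlim := tendsto_setIntegral_of_antitone hSm hS ⟨0, hg⟩
  rw [hS_empty, Measure.restrict_empty, integral_zero_measure] at hlim
  exact (hlim.eventually_lt_const hε).exists

theorem measureReal_singleton_mul_le_setIntegral [MeasurableSingletonClass α] {s : Set α}
    {g : α → ℝ} (hg : IntegrableOn g s μ) (hg0 : 0 ≤ᵐ[μ.restrict s] g) {t : α} (ht : t ∈ s) :
    μ.real {t} * g t ≤ ∫ τ in s, g τ ∂μ := by
  rw [← smul_eq_mul, ← integral_singleton]
  exact setIntegral_mono_set hg hg0 (singleton_subset_iff.2 ht).eventuallyLE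

theorem norm_setIntegral_le_setIntegral_norm_of_subset {E : Type*} [NormedAddCommGroup E]
    [NormedSpace ℝ E] {f : α → E} {s t : Set α} (hst : s ⊆ t) (hf : IntegrableOn f t μ) :
    ‖∫ τ in s, f τ ∂μ‖ ≤ ∫ τ in t, ‖f τ‖ ∂μ :=
  (norm_integral_le_integral_norm _).trans
    (setIntegral_mono_set hf.norm (ae_of_all _ fun _ => norm_nonneg _) hst.eventuallyLE)

theorem eq_zero_of_norm_le_mul_setIntegral {E F : Type*} [NormedAddCommGroup E]
    [NormedAddCommGroup F] {s : Set α}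
    (hs : MeasurableSet s) {Z : α → F} {f : α → E} {g : α → ℝ} {K : ℝ}
    (hf : IntegrableOn f s μ) (hg : IntegrableOn g s μ) (hg0 : ∀ t ∈ s, 0 ≤ g t)
    (hfg : ∀ t ∈ s, ‖f t‖ ≤ g t * ‖Z t‖) (hZ : ∀ t ∈ s, ‖Z t‖ ≤ K * ∫ τ in s, ‖f τ‖ ∂μ)
    (hK : K * ∫ t in s, g t ∂μ < 1) : ∀ t ∈ s, Z t = 0 := by
  set I := ∫ τ in s, ‖f τ‖ ∂μ
  have hI0 : 0 ≤ I := integral_nonneg fun _ => norm_nonneg _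
  have hI : I ≤ (K * ∫ t in s, g t ∂μ) * I := calc
    I ≤ ∫ τ in s, g τ * (K * I) ∂μ := setIntegral_mono_on hf.norm (hg.mul_const _) hs
      fun τ hτ => (hfg τ hτ).trans (mul_le_mul_of_nonneg_left (hZ τ hτ) (hg0 τ hτ))
    _ = (K * ∫ t in s, g t ∂μ) * I := by rw [integral_mul_const]; ring
  have hI_eq : I = 0 := by nlinarith
  intro t ht
  simpa [hI_eq] using hZ t ht

end SetIntegral

section Real

variable {μ : Measure ℝ}

theorem exists_setIntegral_Ioo_right_lt {g : ℝ → ℝ} {a b : ℝ} (hab : a < b)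
    (hg : IntegrableOn g (Ioo a b) μ) {ε : ℝ} (hε : 0 < ε) :
    ∃ b' ∈ Ioc a b, ∫ t in Ioo a b', g t ∂μ < ε := by
  obtain ⟨u, hu_anti, hu_mem, hu_lim⟩ := exists_seq_strictAnti_tendsto' hab
  have hempty : ⋂ k, Ioo a (u k) = ∅ := eq_empty_of_forall_notMem fun t ht => by
    have hat := (mem_iInter.1 ht 0).1
    obtain ⟨k, hk⟩ := (hu_lim.eventually_lt_const hat).exists
    exact (mem_iInter.1 ht k).2.not_gt hk
  obtain ⟨k, hk⟩ := exists_setIntegral_lt_of_antitone (fun _ => measurableSet_Ioo)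
    (fun i j hij => Ioo_subset_Ioo_right (hu_anti.antitone hij)) hempty
    (hg.mono_set (Ioo_subset_Ioo_right (hu_mem 0).2.le)) hε
  exact ⟨u k, ⟨(hu_mem k).1, (hu_mem k).2.le⟩, hk⟩

theorem exists_setIntegral_Ioo_left_lt {g : ℝ → ℝ} {a b : ℝ} (hab : a < b)
    (hg : IntegrableOn g (Ioo a b) μ) {ε : ℝ} (hε : 0 < ε) :
    ∃ a' ∈ Ico a b, ∫ t in Ioo a' b, g t ∂μ < ε := by
  obtain ⟨u, hu_mono, hu_mem, hu_lim⟩ := exists_seq_strictMono_tendsto' hab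
  have hempty : ⋂ k, Ioo (u k) b = ∅ := eq_empty_of_forall_notMem fun t ht => by
    have htb := (mem_iInter.1 ht 0).2
    obtain ⟨k, hk⟩ := (hu_lim.eventually_const_lt htb).exists
    exact (mem_iInter.1 ht k).1.not_gt hk
  obtain ⟨k, hk⟩ := exists_setIntegral_lt_of_antitone (fun _ => measurableSet_Ioo)
    (fun i j hij => Ioo_subset_Ioo_left (hu_mono.monotone hij)) hempty
    (hg.mono_set (Ioo_subset_Ioo_left (hu_mem 0).1.le)) hε
  exact ⟨u k, ⟨(hu_mem k).1.le, (hu_mem k).2⟩, hk⟩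

theorem setIntegral_Ico_eq_measureReal_smul_add {E : Type*} [NormedAddCommGroup E]
    [NormedSpace ℝ E] [CompleteSpace E] {f : ℝ → E} {a b : ℝ} (hab : a < b)
    (hf : IntegrableOn f (Ico a b) μ) :
    ∫ t in Ico a b, f t ∂μ = μ.real {a} • f a + ∫ t in Ioo a b, f t ∂μ := by
  rw [← Ioo_insert_left hab, insert_eq] at hf ⊢
  rw [setIntegral_union (disjoint_singleton_left.2 fun h => h.1.false) measurableSet_Ioo
    (hf.mono_set subset_union_left) (hf.mono_set subset_union_right), integral_singleton]

end Real

theorem Matrix.norm_mulVec_le_sum_norm {R m n : Type*} [SeminormedRing R] [Fintype m]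
    [Fintype n] (A : Matrix m n R) (v : n → R) : ‖A *ᵥ v‖ ≤ (∑ i, ∑ j, ‖A i j‖) * ‖v‖ := by
  have hrow : ∀ i, 0 ≤ ∑ j, ‖A i j‖ := fun i => Finset.sum_nonneg fun j _ => norm_nonneg _
  refine (pi_norm_le_iff_of_nonneg (by positivity)).2 fun i => ?_
  calc ‖(A *ᵥ v) i‖ ≤ ∑ j, ‖A i j‖ * ‖v j‖ :=
        (norm_sum_le _ _).trans (Finset.sum_le_sum fun j _ => norm_mul_le _ _)
    _ ≤ (∑ j, ‖A i j‖) * ‖v‖ := by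
        rw [Finset.sum_mul]
        exact Finset.sum_le_sum fun j _ => by gcongr; exact norm_le_pi_norm v j
    _ ≤ (∑ i, ∑ j, ‖A i j‖) * ‖v‖ := by
        gcongr; exact Finset.single_le_sum (fun i _ => hrow i) (Finset.mem_univ i)

section vInt

variable {n : ℕ} {ω : Measure ℝ} {f f₁ f₂ : ℝ → Fin n → ℂ} {c x : ℝ}

theorem vInt_of_le (h : c ≤ x) : vInt ω f c x = ∫ t in Ico c x, f t ∂ω := if_pos h

theorem vInt_of_ge (h : x ≤ c) : vInt ω f c x = -∫ t in Ico x c, f t ∂ω := by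
  rcases h.eq_or_lt with rfl | h
  · simp [vInt]
  · exact if_neg h.not_ge

theorem vInt_sub (h₁ : IntegrableOn f₁ (Ico c x ∪ Ico x c) ω)
    (h₂ : IntegrableOn f₂ (Ico c x ∪ Ico x c) ω) :
    vInt ω (fun t => f₁ t - f₂ t) c x = vInt ω f₁ c x - vInt ω f₂ c x := by
  rcases le_total c x with h | h
  · simp only [vInt_of_le h]
    exact integral_sub (h₁.mono_set subset_union_left) (h₂.mono_set subset_union_left)
  · simp only [vInt_of_ge h]
    rw [integral_sub (h₁.mono_set subset_union_right) (h₂.mono_set subset_union_right)]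
    abel

theorem vInt_eq_neg_measureReal_smul_add {t : ℝ} (htx : t < x) (hxc : x ≤ c)
    (hf : IntegrableOn f (Ico t x) ω) (hf0 : ∀ τ ∈ Ico x c, f τ = 0) :
    vInt ω f c t = -(ω.real {t} • f t + ∫ τ in Ioo t x, f τ ∂ω) := by
  rw [vInt_of_ge (htx.le.trans hxc), ← setIntegral_Ico_eq_measureReal_smul_add htx hf,
    setIntegral_eq_of_subset_of_forall_sdiff_eq_zero measurableSet_Ico (Ico_subset_Ico_right hxc)]
  exact fun τ hτ => hf0 τ ⟨not_lt.1 fun h => hτ.2 ⟨hτ.1.1, h⟩, hτ.1.2⟩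

end vInt

section Uniqueness

variable {n : ℕ} {ω : Measure ℝ} {Z F : ℝ → Fin n → ℂ} {g : ℝ → ℝ} {c x₀ : ℝ}

theorem eq_zero_of_eq_vInt_of_le (hg0 : ∀ t, 0 ≤ g t) (hFZ : ∀ t, ‖F t‖ ≤ g t * ‖Z t‖)
    (hg : IntegrableOn g (Ico c x₀) ω) (hF : IntegrableOn F (Ico c x₀) ω)
    (hZ : ∀ x ∈ Icc c x₀, Z x = vInt ω F c x) : ∀ x ∈ Icc c x₀, Z x = 0 := by
  have hF0 : ∀ t, Z t = 0 → F t = 0 := fun t ht =>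
    norm_le_zero_iff.1 (by simpa [ht] using hFZ t)
  refine forall_mem_Icc_of_induction_right (fun x hx hbelow => ?_) fun x hx hle => ?_
  · rw [hZ x hx, vInt_of_le hx.1]
    exact setIntegral_eq_zero_of_forall_eq_zero fun t ht => hF0 t (hbelow t ht)
  have hsub : Ioo x x₀ ⊆ Ico c x₀ := fun t ht => ⟨hx.1.trans ht.1.le, ht.2⟩
  obtain ⟨x', hx', hsmall⟩ := exists_setIntegral_Ioo_right_lt hx.2 (hg.mono_set hsub) one_pos
  have hsub' : Ioo x x' ⊆ Ico c x₀ := (Ioo_subset_Ioo_right hx'.2).trans hsub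
  refine ⟨x', hx'.1, eq_zero_of_norm_le_mul_setIntegral (K := 1) measurableSet_Ioo
    (hF.mono_set hsub') (hg.mono_set hsub') (fun t _ => hg0 t) (fun t _ => hFZ t)
    (fun t ht => ?_) (by simpa using hsmall)⟩
  have hZt : Z t = ∫ τ in Ioo x t, F τ ∂ω := by
    rw [hZ t ⟨hx.1.trans ht.1.le, ht.2.le.trans hx'.2⟩, vInt_of_le (hx.1.trans ht.1.le)]
    refine setIntegral_eq_of_subset_of_forall_sdiff_eq_zero measurableSet_Ico
      (fun τ hτ => ⟨hx.1.trans hτ.1.le, hτ.2⟩) fun τ hτ => hF0 τ (hle τ ⟨hτ.1.1, ?_⟩)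
    exact not_lt.1 fun h => hτ.2 ⟨h, hτ.1.2⟩
  rw [hZt, one_mul]
  exact norm_setIntegral_le_setIntegral_norm_of_subset (Ioo_subset_Ioo_right ht.2.le)
    (hF.mono_set hsub')

theorem eq_zero_of_eq_vInt_of_ge {M : ℝ → Matrix (Fin n) (Fin n) ℂ}
    (hreg : ∀ x ∈ Icc x₀ c, IsUnit (1 + (ω {x}).toReal • M x)) (hg0 : ∀ t, 0 ≤ g t)
    (hMg : ∀ t, ‖M t *ᵥ Z t‖ ≤ g t * ‖Z t‖) (hg : IntegrableOn g (Ico x₀ c) ω)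
    (hF : IntegrableOn (fun t => M t *ᵥ Z t) (Ico x₀ c) ω)
    (hZ : ∀ x ∈ Icc x₀ c, Z x = vInt ω (fun t => M t *ᵥ Z t) c x) :
    ∀ x ∈ Icc x₀ c, Z x = 0 := by
  have hF0 : ∀ t, Z t = 0 → M t *ᵥ Z t = 0 := fun t ht => by simp [ht]
  refine forall_mem_Icc_of_induction_left (fun x hx habove => ?_) fun x hx hle => ?_
  · rcases hx.2.eq_or_lt with rfl | hxc
    · simpa [vInt] using hZ x hx
    have hZx : Z x = -(ω.real {x} • (M x *ᵥ Z x)) := by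
      refine (hZ x hx).trans ?_
      rw [vInt_eq_neg_measureReal_smul_add hxc le_rfl
          (hF.mono_set (Ico_subset_Ico_left hx.1)) (by simp),
        setIntegral_eq_zero_of_forall_eq_zero fun t ht => hF0 t (habove t ⟨ht.1, ht.2.le⟩),
        add_zero]
    refine mulVec_injective_iff_isUnit.2 (hreg x hx) ?_
    rw [add_mulVec, one_mulVec, smul_mulVec, mulVec_zero, ← measureReal_def]
    nth_rewrite 1 [hZx]
    exact neg_add_cancel _
  have hsub : Ioo x₀ x ⊆ Ico x₀ c := fun t ht => ⟨ht.1.le, ht.2.trans_le hx.2⟩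
  obtain ⟨x', hx', hsmall⟩ :=
    exists_setIntegral_Ioo_left_lt hx.1 (hg.mono_set hsub) (by norm_num : (0 : ℝ) < 1 / 2)
  have hsub' : Ioo x' x ⊆ Ico x₀ c := (Ioo_subset_Ioo_left hx'.1).trans hsub
  refine ⟨x', hx'.2, eq_zero_of_norm_le_mul_setIntegral (K := 2) measurableSet_Ioo
    (hF.mono_set hsub') (hg.mono_set hsub') (fun t _ => hg0 t) (fun t _ => hMg t)
    (fun t ht => ?_) (by linarith)⟩
  have hZt : Z t = -(ω.real {t} • (M t *ᵥ Z t) + ∫ τ in Ioo t x, M τ *ᵥ Z τ ∂ω) :=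
    (hZ t ⟨hx'.1.trans ht.1.le, ht.2.le.trans hx.2⟩).trans
      (vInt_eq_neg_measureReal_smul_add ht.2 hx.2
        (hF.mono_set (Ico_subset_Ico (hx'.1.trans ht.1.le) hx.2))
        fun τ hτ => hF0 τ (hle τ ⟨hτ.1, hτ.2.le⟩))
  have hatom : ω.real {t} * g t ≤ 1 / 2 := (measureReal_singleton_mul_le_setIntegral
    (hg.mono_set hsub') (ae_of_all _ fun _ => hg0 _) ht).trans hsmall.le
  have hnorm : ‖Z t‖ ≤ ω.real {t} * g t * ‖Z t‖ + ∫ τ in Ioo x' x, ‖M τ *ᵥ Z τ‖ ∂ω := calc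
    ‖Z t‖ = ‖ω.real {t} • (M t *ᵥ Z t) + ∫ τ in Ioo t x, M τ *ᵥ Z τ ∂ω‖ :=
      (congrArg norm hZt).trans (norm_neg _)
    _ ≤ ‖ω.real {t} • (M t *ᵥ Z t)‖ + ‖∫ τ in Ioo t x, M τ *ᵥ Z τ ∂ω‖ := norm_add_le _ _
    _ ≤ ω.real {t} * (g t * ‖Z t‖) + ∫ τ in Ioo x' x, ‖M τ *ᵥ Z τ‖ ∂ω := by
      rw [norm_smul, Real.norm_of_nonneg measureReal_nonneg]
      exact add_le_add (by gcongr; exact hMg t) (norm_setIntegral_le_setIntegral_norm_of_subset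
        (Ioo_subset_Ioo_left ht.1.le) (hF.mono_set hsub'))
    _ = _ := by ring
  nlinarith [mul_le_mul_of_nonneg_right hatom (norm_nonneg (Z t))]

end Uniqueness

/-- Uniqueness for the homogeneous linear measure differential equation
`Y(x) = Y_c + ∫_c^x M(t) Y(t) dω(t)`, provided `I + ω{x}·M(x)` is invertible everywhere. -/
theorem stmt4 {n : ℕ} (a b c : ℝ) (ω : Measure ℝ)
    (M : ℝ → Matrix (Fin n) (Fin n) ℂ) (hc : c ∈ Set.Ioo a b)
    (hM : ∀ α ∈ Set.Ioo a b, ∀ β ∈ Set.Ioo a b, ∀ i j,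
      IntegrableOn (fun t => M t i j) (Set.Ico α β) ω)
    (hreg : ∀ x ∈ Set.Ioo a b, IsUnit (1 + (ω {x}).toReal • M x))
    (Yc : Fin n → ℂ) (Y₁ Y₂ : ℝ → Fin n → ℂ)
    (hi₁ : ∀ α ∈ Set.Ioo a b, ∀ β ∈ Set.Ioo a b,
      IntegrableOn (fun t => (M t).mulVec (Y₁ t)) (Set.Ico α β) ω)
    (hi₂ : ∀ α ∈ Set.Ioo a b, ∀ β ∈ Set.Ioo a b,
      IntegrableOn (fun t => (M t).mulVec (Y₂ t)) (Set.Ico α β) ω)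
    (h₁ : ∀ x ∈ Set.Ioo a b, Y₁ x = Yc + vInt ω (fun t => (M t).mulVec (Y₁ t)) c x)
    (h₂ : ∀ x ∈ Set.Ioo a b, Y₂ x = Yc + vInt ω (fun t => (M t).mulVec (Y₂ t)) c x) :
    ∀ x ∈ Set.Ioo a b, Y₁ x = Y₂ x := by
  intro x hx
  set Z : ℝ → Fin n → ℂ := fun t => Y₁ t - Y₂ t
  set g : ℝ → ℝ := fun t => ∑ i, ∑ j, ‖M t i j‖
  have hg0 : ∀ t, 0 ≤ g t := fun t => by positivity
  have hMg : ∀ t, ‖M t *ᵥ Z t‖ ≤ g t * ‖Z t‖ := fun t => (M t).norm_mulVec_le_sum_norm (Z t)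
  have hg : ∀ α ∈ Ioo a b, ∀ β ∈ Ioo a b, IntegrableOn g (Ico α β) ω := fun α hα β hβ =>
    integrable_finsetSum _ fun i _ => integrable_finsetSum _ fun j _ => (hM α hα β hβ i j).norm
  have hF : ∀ α ∈ Ioo a b, ∀ β ∈ Ioo a b, IntegrableOn (fun t => M t *ᵥ Z t) (Ico α β) ω :=
    fun α hα β hβ => by simp only [Z, mulVec_sub]; exact (hi₁ α hα β hβ).sub (hi₂ α hα β hβ)
  have hZ : ∀ y ∈ Ioo a b, Z y = vInt ω (fun t => M t *ᵥ Z t) c y := fun y hy => by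
    simp only [Z, mulVec_sub]
    rw [h₁ y hy, h₂ y hy, vInt_sub ((hi₁ c hc y hy).union (hi₁ y hy c hc))
      ((hi₂ c hc y hy).union (hi₂ y hy c hc))]
    abel
  suffices Z x = 0 from sub_eq_zero.1 this
  rcases le_total c x with hcx | hxc
  · exact eq_zero_of_eq_vInt_of_le hg0 hMg (hg c hc x hx) (hF c hc x hx)
      (fun y hy => hZ y (Icc_subset_Ioo hc.1 hx.2 hy)) x ⟨hcx, le_rfl⟩
  · exact eq_zero_of_eq_vInt_of_ge (fun y hy => hreg y (Icc_subset_Ioo hx.1 hc.2 hy)) hg0 hMg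
      (hg x hx c hc) (hF x hx c hc) (fun y hy => hZ y (Icc_subset_Ioo hx.1 hc.2 hy)) x
      ⟨le_rfl, hxc⟩
end

section
/- Under the standing assumption that $\varsigma$ has no point masses in common with $\varrho$ or $\chi$ (i.e., $\varsigma(\{x\})\varrho(\{x\}) = \varsigma(\{x\})\chi(\{x\}) = 0$ for all $x$), the Lagrange identity holds: for all $f, g \in \mathfrak{D}_\tau$ and $\alpha < \beta$ in $(a,b)$, $\int_{[\alpha,\beta)} (g\, \tau f - f\, \tau g)\, d\varrho = W(f,g)(\beta) - W(f,g)(\alpha)$, where $W(f,g)(x) = f(x) g^{[1]}(x) - f^{[1]}(x) g(x)$. -/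
open MeasureTheory Set Filter

/-- The two-sided Lebesgue–Stieltjes integral `∫_c^x h dω`. -/
noncomputable def mInt (ω : Measure ℝ) (h : ℝ → ℂ) (c x : ℝ) : ℂ :=
  if c ≤ x then ∫ t in Set.Ico c x, h t ∂ω else -∫ t in Set.Ico x c, h t ∂ω

/-- Local integrability on compact subintervals of `(a,b)` with respect to `ω`. -/
def LocInt (a b : ℝ) (ω : Measure ℝ) (h : ℝ → ℂ) : Prop :=
  ∀ α ∈ Set.Ioo a b, ∀ β ∈ Set.Ioo a b, MeasureTheory.IntegrableOn h (Set.Ico α β) ω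

/-- `(f, f1, fτ)` consists of a function `f` in the maximal domain `𝔇_τ` of
`τ f = d/dϱ (-df/dς + ∫ f dχ)`, its quasi-derivative `f1 = df/dς` and `fτ = τ f`.
The locally finite complex Borel measures `ς`, `χ`, `ϱ` on `(a,b)` are represented
by their densities `σf`, `χf`, `ρf` with respect to the positive Borel measure `ω`. -/
def InDom (a b : ℝ) (ω : Measure ℝ) (σf χf ρf : ℝ → ℂ) (f f1 fτ : ℝ → ℂ) : Prop :=
  LocInt a b ω (fun t => f1 t * σf t) ∧
  LocInt a b ω (fun t => f t * χf t - fτ t * ρf t) ∧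
  ∀ α ∈ Set.Ioo a b, ∀ β ∈ Set.Ioo a b, α ≤ β →
    f β = f α + ∫ t in Set.Ico α β, f1 t * σf t ∂ω ∧
    f1 β = f1 α + ∫ t in Set.Ico α β, (f t * χf t - fτ t * ρf t) ∂ω

/-- `supp ς = (a,b)`: every nondegenerate compact subinterval carries `ς`-mass. -/
def SuppFull (a b : ℝ) (ω : Measure ℝ) (σf : ℝ → ℂ) : Prop :=
  ∀ α ∈ Set.Ioo a b, ∀ β ∈ Set.Ioo a b, α < β → ∫ t in Set.Ico α β, ‖σf t‖ ∂ω ≠ 0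

/-- `ς` has no point masses in common with `ϱ` or `χ`:
`ς{x}·ϱ{x} = ς{x}·χ{x} = 0` for all `x ∈ (a,b)`. -/
def NoCommonAtoms (a b : ℝ) (ω : Measure ℝ) (σf χf ρf : ℝ → ℂ) : Prop :=
  ∀ x ∈ Set.Ioo a b,
    ((ω {x}).toReal : ℂ) * σf x * (((ω {x}).toReal : ℂ) * ρf x) = 0 ∧
    ((ω {x}).toReal : ℂ) * σf x * (((ω {x}).toReal : ℂ) * χf x) = 0

/-- The measures `ς`, `χ` are real and `ϱ` is positive. -/
def RealCoeffs (σf χf ρf : ℝ → ℂ) : Prop :=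
  (∀ t, (σf t).im = 0) ∧ (∀ t, (χf t).im = 0) ∧ (∀ t, (ρf t).im = 0 ∧ 0 ≤ (ρf t).re)

/-- `x` belongs to the support of the measure `ϱ` (with density `ρf` w.r.t. `ω`). -/
def InSuppRho (a b : ℝ) (ω : Measure ℝ) (ρf : ℝ → ℂ) (x : ℝ) : Prop :=
  ∀ ε > 0, ¬ (∀ᵐ t ∂ω, (t ∈ Set.Ioo (x - ε) (x + ε) ∧ t ∈ Set.Ioo a b) → ρf t = 0)

/-- The gap condition: for each gap `(α,β)` of `supp ϱ` and every `f ∈ 𝔇_τ` with outer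
limits `f(α-) = f(β+) = 0` one has `f ≡ 0` on `(α,β)`. -/
def GapCondition (a b : ℝ) (ω : Measure ℝ) (σf χf ρf : ℝ → ℂ) : Prop :=
  ∀ α ∈ Set.Ioo a b, ∀ β ∈ Set.Ioo a b, α < β →
    (∀ᵐ t ∂ω, t ∈ Set.Ioo α β → ρf t = 0) →
    InSuppRho a b ω ρf α → InSuppRho a b ω ρf β →
    ∀ f f1 fτ : ℝ → ℂ, InDom a b ω σf χf ρf f f1 fτ →
      Filter.Tendsto f (nhdsWithin α (Set.Iio α)) (nhds 0) →
      Filter.Tendsto f (nhdsWithin β (Set.Ioi β)) (nhds 0) →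
      ∀ x ∈ Set.Ioo α β, f x = 0

/-- `supp ϱ` contains at least two points. -/
def SuppRhoTwoPoints (a b : ℝ) (ω : Measure ℝ) (ρf : ℝ → ℂ) : Prop :=
  ∃ x ∈ Set.Ioo a b, ∃ y ∈ Set.Ioo a b, x ≠ y ∧
    InSuppRho a b ω ρf x ∧ InSuppRho a b ω ρf y

/-!
Both terms of the Wronskian are products of two Stieltjes primitives: `f` and `g^{[1]}` have
differentials `f^{[1]} dς` and `g dχ - τg dϱ`. For left-continuous primitives `F`, `G` of `u dω`,
`v dω` on `[α, β)`, Fubini on the square `[α, β)²`, split along the diagonal, gives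
`F(β) G(β) - F(α) G(α) = ∫_{[α,β)} (v F + u G) dω + Σ_t u(t) v(t) ω{t}`, and the atomic sum
vanishes because `ς` shares no atoms with `χ` or `ϱ`. Applied to `f g^{[1]}` and `f^{[1]} g`,
the `ς`- and `χ`-terms cancel and only `∫ (g τf - f τg) dϱ` remains.
-/

section IntegrationByParts

variable {α 𝕜 : Type*} [LinearOrder α] [TopologicalSpace α] [OrderClosedTopology α]
  [SecondCountableTopology α] [MeasurableSpace α] [OpensMeasurableSpace α] [RCLike 𝕜]

theorem integral_mul_integral_eq_integral_Iio_add_integral_Iic_of_sFinite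
    {μ : Measure α} [SFinite μ] {u v : α → 𝕜} (hu : Integrable u μ) (hv : Integrable v μ) :
    Integrable (fun s => v s * ∫ t in Iio s, u t ∂μ) μ ∧
    Integrable (fun t => u t * ∫ s in Iic t, v s ∂μ) μ ∧
    (∫ t, u t ∂μ) * ∫ s, v s ∂μ =
      (∫ s, v s * ∫ t in Iio s, u t ∂μ ∂μ) + ∫ t, u t * ∫ s in Iic t, v s ∂μ ∂μ := by
  set D : Set (α × α) := {p | p.1 < p.2}
  have hD : MeasurableSet D := measurableSet_lt measurable_fst measurable_snd
  set h : α × α → 𝕜 := fun p => u p.1 * v p.2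
  have hh : Integrable h (μ.prod μ) := hu.mul_prod hv
  have below (s : α) :
      (fun t => D.indicator h (t, s)) = (Iio s).indicator (fun t => u t * v s) := by
    ext t; by_cases ht : t < s <;> simp [D, h, ht]
  have above (t : α) :
      (fun s => Dᶜ.indicator h (t, s)) = (Iic t).indicator (fun s => u t * v s) := by
    ext s; by_cases hs : t < s <;> simp [D, h, hs, not_lt.mp]
  have eq_below (s : α) : ∫ t, D.indicator h (t, s) ∂μ = v s * ∫ t in Iio s, u t ∂μ := by
    rw [below, integral_indicator measurableSet_Iio, integral_mul_const, mul_comm]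
  have eq_above (t : α) : ∫ s, Dᶜ.indicator h (t, s) ∂μ = u t * ∫ s in Iic t, v s ∂μ := by
    rw [above, integral_indicator measurableSet_Iic, integral_const_mul]
  have hD_int := hh.indicator hD
  have hDc_int := hh.indicator hD.compl
  refine ⟨?_, ?_, ?_⟩
  · simpa only [eq_below] using hD_int.integral_prod_right
  · simpa only [eq_above] using hDc_int.integral_prod_left
  · rw [← integral_prod_mul, ← integral_add_compl hD hh, ← integral_indicator hD,
      ← integral_indicator hD.compl, integral_prod_symm _ hD_int, integral_prod _ hDc_int]
    simp only [eq_below, eq_above]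

theorem integral_mul_integral_eq_integral_Iio_add_integral_Iic
    {μ : Measure α} {u v : α → 𝕜} (hu : Integrable u μ) (hv : Integrable v μ) :
    Integrable (fun s => v s * ∫ t in Iio s, u t ∂μ) μ ∧
    Integrable (fun t => u t * ∫ s in Iic t, v s ∂μ) μ ∧
    (∫ t, u t ∂μ) * ∫ s, v s ∂μ =
      (∫ s, v s * ∫ t in Iio s, u t ∂μ ∂μ) + ∫ t, u t * ∫ s in Iic t, v s ∂μ ∂μ := by
  -- `u` and `v` vanish off a set `S` on which `μ` is σ-finite, so Fubini applies to `μ.restrict S`.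
  obtain ⟨S, hS, huv0, hS_sigmaFinite⟩ :=
    (hu.prodMk hv).aefinStronglyMeasurable.exists_set_sigmaFinite
  rw [EventuallyEq, ae_restrict_iff' hS.compl] at huv0
  have hu0 : ∀ᵐ x ∂μ, x ∉ S → u x = 0 := by
    filter_upwards [huv0] with x hx hxS using congrArg Prod.fst (hx hxS)
  have hv0 : ∀ᵐ x ∂μ, x ∉ S → v x = 0 := by
    filter_upwards [huv0] with x hx hxS using congrArg Prod.snd (hx hxS)
  have restrict_S {w : α → 𝕜} (hw : ∀ᵐ x ∂μ, x ∉ S → w x = 0) {I : Set α}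
      (hI : MeasurableSet I) : ∫ x in I, w x ∂μ.restrict S = ∫ x in I, w x ∂μ := by
    rw [Measure.restrict_comm hI]
    exact setIntegral_eq_integral_of_ae_compl_eq_zero (ae_restrict_of_ae hw)
  obtain ⟨h₁, h₂, h₃⟩ :=
    integral_mul_integral_eq_integral_Iio_add_integral_Iic_of_sFinite hu.restrict hv.restrict
      (μ := μ.restrict S)
  simp only [restrict_S hu0 measurableSet_Iio, restrict_S hv0 measurableSet_Iic] at h₁ h₂ h₃
  have hv0' : ∀ᵐ x ∂μ, x ∉ S → v x * ∫ t in Iio x, u t ∂μ = 0 := by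
    filter_upwards [hv0] with x hx hxS; simp [hx hxS]
  have hu0' : ∀ᵐ x ∂μ, x ∉ S → u x * ∫ t in Iic x, v t ∂μ = 0 := by
    filter_upwards [hu0] with x hx hxS; simp [hx hxS]
  refine ⟨IntegrableOn.integrable_of_ae_notMem_eq_zero h₁ hv0',
    IntegrableOn.integrable_of_ae_notMem_eq_zero h₂ hu0', ?_⟩
  rwa [setIntegral_eq_integral_of_ae_compl_eq_zero hu0,
    setIntegral_eq_integral_of_ae_compl_eq_zero hv0,
    setIntegral_eq_integral_of_ae_compl_eq_zero hv0',
    setIntegral_eq_integral_of_ae_compl_eq_zero hu0'] at h₃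

theorem integral_mul_integral_eq_integral_Iio_add_integral_Iio
    {μ : Measure α} {u v : α → 𝕜} (hu : Integrable u μ) (hv : Integrable v μ)
    (hdiag : ∀ t, u t * v t * μ.real {t} = 0) :
    Integrable (fun s => v s * ∫ t in Iio s, u t ∂μ) μ ∧
    Integrable (fun t => u t * ∫ s in Iio t, v s ∂μ) μ ∧
    (∫ t, u t ∂μ) * ∫ s, v s ∂μ =
      (∫ s, v s * ∫ t in Iio s, u t ∂μ ∂μ) + ∫ t, u t * ∫ s in Iio t, v s ∂μ ∂μ := by
  have Iic_eq_Iio (t : α) : u t * ∫ s in Iic t, v s ∂μ = u t * ∫ s in Iio t, v s ∂μ := by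
    rw [← Iio_union_right, setIntegral_union (by simp) (measurableSet_singleton t)
      hv.integrableOn hv.integrableOn, integral_singleton, RCLike.real_smul_eq_coe_mul]
    linear_combination hdiag t
  simpa only [Iic_eq_Iio] using integral_mul_integral_eq_integral_Iio_add_integral_Iic hu hv

theorem mul_sub_mul_eq_setIntegral_Ico {ω : Measure α} {a b : α} (hab : a ≤ b)
    {u v F G : α → 𝕜}
    (hu : IntegrableOn u (Ico a b) ω) (hv : IntegrableOn v (Ico a b) ω)
    (hF : ∀ s ∈ Icc a b, F s = F a + ∫ t in Ico a s, u t ∂ω)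
    (hG : ∀ s ∈ Icc a b, G s = G a + ∫ t in Ico a s, v t ∂ω)
    (hdiag : ∀ t ∈ Ico a b, u t * v t * ω.real {t} = 0) :
    IntegrableOn (fun s => v s * F s + u s * G s) (Ico a b) ω ∧
    F b * G b - F a * G a = ∫ s in Ico a b, (v s * F s + u s * G s) ∂ω := by
  set μ := ω.restrict (Ico a b)
  have hdiag' (t : α) : u t * v t * μ.real {t} = 0 := by
    rw [measureReal_restrict_apply (measurableSet_singleton t)]
    by_cases ht : t ∈ Ico a b
    · rw [singleton_inter_of_mem ht, hdiag t ht]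
    · rw [singleton_inter_of_notMem ht, measureReal_empty, RCLike.ofReal_zero, mul_zero]
  have primitive {w W : α → 𝕜} (hW : ∀ s ∈ Icc a b, W s = W a + ∫ t in Ico a s, w t ∂ω)
      (s : α) (hs : s ∈ Icc a b) : ∫ t in Iio s, w t ∂μ = W s - W a := by
    rw [Measure.restrict_restrict measurableSet_Iio, inter_comm, Ico_inter_Iio,
      min_eq_right hs.2, hW s hs]
    ring
  have total {w W : α → 𝕜} (hW : ∀ s ∈ Icc a b, W s = W a + ∫ t in Ico a s, w t ∂ω) :
      ∫ t, w t ∂μ = W b - W a := by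
    rw [← primitive hW b ⟨hab, le_rfl⟩, Measure.restrict_restrict measurableSet_Iio, inter_comm,
      Ico_inter_Iio, min_self]
  obtain ⟨hvF, huG, hprod⟩ := integral_mul_integral_eq_integral_Iio_add_integral_Iio hu hv hdiag'
  have hconst : Integrable (fun s => F a * v s + G a * u s) μ :=
    (hv.const_mul (F a)).add (hu.const_mul (G a))
  have hsplit : (fun s => v s * F s + u s * G s) =ᵐ[μ] fun s =>
      (v s * ∫ t in Iio s, u t ∂μ + u s * ∫ t in Iio s, v t ∂μ) + (F a * v s + G a * u s) := by
    filter_upwards [ae_restrict_mem measurableSet_Ico] with s hs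
    rw [primitive hF s (Ico_subset_Icc_self hs), primitive hG s (Ico_subset_Icc_self hs)]
    ring
  refine ⟨((hvF.add huG).add hconst).congr hsplit.symm, ?_⟩
  rw [integral_congr_ae hsplit, integral_add (by exact hvF.add huG) hconst,
    integral_add hvF huG, ← hprod, integral_add (hv.const_mul _) (hu.const_mul _),
    integral_const_mul, integral_const_mul, total hF, total hG]
  ring

end IntegrationByParts

theorem NoCommonAtoms.mul_mul_measureReal_singleton_eq_zero {a b : ℝ} {ω : Measure ℝ}
    {σf χf ρf : ℝ → ℂ} (h : NoCommonAtoms a b ω σf χf ρf) {x : ℝ} (hx : x ∈ Ioo a b)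
    (p q r : ℂ) : p * σf x * (q * χf x - r * ρf x) * (ω.real {x} : ℂ) = 0 := by
  set c : ℂ := (ω.real {x} : ℂ)
  by_cases hc : c = 0
  · rw [hc, mul_zero]
  have cancel {y : ℂ} (hy : c * σf x * (c * y) = 0) : σf x * y = 0 :=
    (mul_eq_zero.mp (by linear_combination hy : c * c * (σf x * y) = 0)).resolve_left
      (mul_self_ne_zero.mpr hc)
  linear_combination (p * q * c) * cancel (h x hx).2 - (p * r * c) * cancel (h x hx).1

theorem stmt7_general (a b : ℝ) (ω : Measure ℝ) (σf χf ρf : ℝ → ℂ)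
    (hatoms : NoCommonAtoms a b ω σf χf ρf)
    (f f1 fτ g g1 gτ : ℝ → ℂ)
    (hf : InDom a b ω σf χf ρf f f1 fτ)
    (hg : InDom a b ω σf χf ρf g g1 gτ) :
    ∀ α ∈ Set.Ioo a b, ∀ β ∈ Set.Ioo a b, α < β →
      ∫ t in Set.Ico α β, (g t * fτ t - f t * gτ t) * ρf t ∂ω =
        (f β * g1 β - f1 β * g β) - (f α * g1 α - f1 α * g α) := by
  intro α hα β hβ hαβ
  have hsub : Icc α β ⊆ Ioo a b := Icc_subset_Ioo hα.1 hβ.2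
  obtain ⟨hint_fg1, hfg1⟩ := mul_sub_mul_eq_setIntegral_Ico hαβ.le (hf.1 α hα β hβ)
    (hg.2.1 α hα β hβ) (fun s hs => (hf.2.2 α hα s (hsub hs) hs.1).1)
    (fun s hs => (hg.2.2 α hα s (hsub hs) hs.1).2)
    (fun t ht => hatoms.mul_mul_measureReal_singleton_eq_zero
      (hsub (Ico_subset_Icc_self ht)) (f1 t) (g t) (gτ t))
  obtain ⟨hint_gf1, hgf1⟩ := mul_sub_mul_eq_setIntegral_Ico hαβ.le (hg.1 α hα β hβ)
    (hf.2.1 α hα β hβ) (fun s hs => (hg.2.2 α hα s (hsub hs) hs.1).1)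
    (fun s hs => (hf.2.2 α hα s (hsub hs) hs.1).2)
    (fun t ht => hatoms.mul_mul_measureReal_singleton_eq_zero
      (hsub (Ico_subset_Icc_self ht)) (g1 t) (f t) (fτ t))
  calc ∫ t in Ico α β, (g t * fτ t - f t * gτ t) * ρf t ∂ω
      = ∫ t in Ico α β, ((g t * χf t - gτ t * ρf t) * f t + f1 t * σf t * g1 t) -
          ((f t * χf t - fτ t * ρf t) * g t + g1 t * σf t * f1 t) ∂ω := by
        congr 1 with t; ring
    _ = (f β * g1 β - f1 β * g β) - (f α * g1 α - f1 α * g α) := by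
        rw [integral_sub hint_fg1 hint_gf1, ← hfg1, ← hgf1]; ring

/-- The Lagrange identity:
`∫_{[α,β)} (g·τf - f·τg) dϱ = W(f,g)(β) - W(f,g)(α)`. -/
theorem stmt7 (a b : ℝ) (hab : a < b) (ω : Measure ℝ) (σf χf ρf : ℝ → ℂ)
    (hσ : LocInt a b ω σf) (hχ : LocInt a b ω χf) (hρ : LocInt a b ω ρf)
    (hsupp : SuppFull a b ω σf)
    (hatoms : NoCommonAtoms a b ω σf χf ρf)
    (f f1 fτ g g1 gτ : ℝ → ℂ)
    (hf : InDom a b ω σf χf ρf f f1 fτ)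
    (hg : InDom a b ω σf χf ρf g g1 gτ)
    (hint : LocInt a b ω (fun t => (g t * fτ t - f t * gτ t) * ρf t)) :
    ∀ α ∈ Set.Ioo a b, ∀ β ∈ Set.Ioo a b, α < β →
      ∫ t in Set.Ico α β, (g t * fτ t - f t * gτ t) * ρf t ∂ω =
        (f β * g1 β - f1 β * g β) - (f α * g1 α - f1 α * g α) :=
  stmt7_general a b ω σf χf ρf hatoms f f1 fτ g g1 gτ hf hg
end

section
/- Assume the full Hypothesis (positive $\varrho$, real $\chi$ and $\varsigma$, $\mathrm{supp}(\varsigma)=(a,b)$, no common atoms, gap condition, $|\mathrm{supp}(\varrho)|>1$). If $f \in \mathfrak{D}_\tau$ satisfies $f = 0$ $\varrho$-almost everywhere and $\tau f = 0$ $\varrho$-almost everywhere, then $f$ vanishes identically on $(a,b)$. Consequently the map $f \mapsto (f, \tau f)$ from $\mathfrak{D}_\tau$ into $L^1_{loc}((a,b);\varrho) \times L^1_{loc}((a,b);\varrho)$ is injective. -/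
open MeasureTheory Set Filter

open Topology

/-!
Put `h = f - g`. Then `(h, h^{[1]})` solves the homogeneous system `dh = h^{[1]} dς`,
`dh^{[1]} = h dχ` off a `ϱ`-null set, and `h = 0` `ϱ`-a.e. Such solutions are unique: a
Gronwall-type contraction propagates a common zero of `h` and `h^{[1]}` to the right, and also to
the left because `ς{x} χ{x} = 0` makes the jump relations at atoms invertible. A common zero is
found as follows. `h` is left-continuous, so it vanishes at every point where `ϱ`-mass accumulates
from the left. Given two points of `supp ϱ`, either every point between them is of this kind, or
there is a gap of `supp ϱ` between them, at whose endpoints the outer limits of `h` vanish, so that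
the gap condition applies. Either way `h` vanishes on an interval; there `h^{[1]}` is constant,
and since `supp ς = (a,b)` that constant is `0`.
-/

section SetIntegral

variable {E : Type*} [NormedAddCommGroup E] [NormedSpace ℝ E]

theorem tendsto_setIntegral_of_eventually_mem_iff {X ι : Type*} [MeasurableSpace X]
    {μ : Measure X} {g : X → E} {l : Filter ι} [l.IsCountablyGenerated] {A T : Set X}
    {S : ι → Set X} (hA : MeasurableSet A) (hg : IntegrableOn g A μ)
    (hS : ∀ i, MeasurableSet (S i)) (hT : MeasurableSet T)
    (hSA : ∀ i, S i ⊆ A) (hST : ∀ x, ∀ᶠ i in l, x ∈ S i ↔ x ∈ T) :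
    Tendsto (fun i ↦ ∫ x in S i, g x ∂μ) l (𝓝 (∫ x in T, g x ∂μ)) := by
  simp only [← integral_indicator (hS _), ← integral_indicator hT]
  refine tendsto_integral_filter_of_dominated_convergence (A.indicator (‖g ·‖))
    (.of_forall fun i ↦ (aestronglyMeasurable_indicator_iff (hS i)).2 (hg.1.mono_set (hSA i)))
    (.of_forall fun i ↦ .of_forall fun x ↦ ?_)
    ((integrable_indicator_iff hA).2 hg.norm) (.of_forall fun x ↦ ?_)
  · by_cases hx : x ∈ S i
    · simp [hx, hSA i hx]
    · simp [hx, indicator_nonneg (fun _ _ ↦ norm_nonneg _)]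
  · refine tendsto_const_nhds.congr' ((hST x).mono fun i hi ↦ ?_)
    by_cases hx : x ∈ T <;> simp [hx, hi]

theorem tendsto_setIntegral_Ico_nhdsLT {e x : ℝ} {g : ℝ → E} {μ : Measure ℝ}
    (hex : e < x) (hg : IntegrableOn g (Ico e x) μ) :
    Tendsto (fun s ↦ ∫ t in Ico s x, g t ∂μ) (𝓝[<] x) (𝓝 0) := by
  have := tendsto_setIntegral_of_eventually_mem_iff (l := 𝓝[<] x) measurableSet_Ico hg
    (fun s ↦ measurableSet_Ico (a := max s e) (b := x)) MeasurableSet.empty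
    (fun s ↦ Ico_subset_Ico (le_max_right _ _) le_rfl) fun t ↦ ?_
  · rw [setIntegral_empty] at this
    refine this.congr' ?_
    filter_upwards [Ioo_mem_nhdsLT hex] with s hs
    rw [max_eq_left hs.1.le]
  · rcases lt_or_ge t x with htx | hxt
    · filter_upwards [Ioo_mem_nhdsLT htx] with s hs
      simp [hs.1.not_ge]
    · exact .of_forall fun s ↦ by simp [hxt.not_gt]

theorem tendsto_setIntegral_Ioo_nhdsGT {x d : ℝ} {g : ℝ → E} {μ : Measure ℝ}
    (hxd : x < d) (hg : IntegrableOn g (Ico x d) μ) :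
    Tendsto (fun s ↦ ∫ t in Ioo x s, g t ∂μ) (𝓝[>] x) (𝓝 0) := by
  have := tendsto_setIntegral_of_eventually_mem_iff (l := 𝓝[>] x) measurableSet_Ico hg
    (fun s ↦ measurableSet_Ioo (a := x) (b := min s d)) MeasurableSet.empty
    (fun s ↦ Ioo_subset_Ico_self.trans (Ico_subset_Ico le_rfl (min_le_right _ _))) fun t ↦ ?_
  · rw [setIntegral_empty] at this
    refine this.congr' ?_
    filter_upwards [Ioo_mem_nhdsGT hxd] with s hs
    rw [min_eq_left hs.2.le]
  · rcases lt_or_ge x t with hxt | htx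
    · filter_upwards [Ioo_mem_nhdsGT hxt] with s hs
      simp [hs.2.not_gt]
    · exact .of_forall fun s ↦ by simp [htx.not_gt]

theorem ae_eq_zero_of_forall_setIntegral_Ico_eq_zero [CompleteSpace E] {μ : Measure ℝ}
    {g : ℝ → E} (hg : Integrable g μ)
    (huniv : ∫ x, g x ∂μ = 0) (hIco : ∀ s t, s < t → ∫ x in Ico s t, g x ∂μ = 0) :
    g =ᵐ[μ] 0 := by
  refine hg.ae_eq_of_withDensityᵥ_eq (integrable_zero _ _ _) ?_
  rw [withDensityᵥ_zero]
  refine VectorMeasure.ext_of_generateFrom _ ?_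
    (BorelSpace.measurable_eq.trans (borel_eq_generateFrom_Ico ℝ)) (isPiSystem_Ico id id) ?_
  · rintro - ⟨s, t, hst, rfl⟩
    rw [withDensityᵥ_apply hg measurableSet_Ico]
    exact hIco s t hst
  · rw [withDensityᵥ_apply hg MeasurableSet.univ, Measure.restrict_univ]
    exact huniv

end SetIntegral

theorem eq_zero_of_forall_le_imp_le_mul {ι : Type*} {N : ι → ℝ} {M ε : ℝ} (hN : ∀ i, 0 ≤ N i)
    (hM : ∀ i, N i ≤ M) (hε₀ : 0 ≤ ε) (hε₁ : ε < 1)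
    (hcontr : ∀ C, (∀ i, N i ≤ C) → ∀ i, N i ≤ ε * C) (i : ι) : N i = 0 := by
  have hpow : ∀ n : ℕ, ∀ i, N i ≤ ε ^ n * M := by
    intro n
    induction n with
    | zero => simpa using hM
    | succ n ih => exact fun i ↦ (hcontr _ ih i).trans_eq (by ring)
  refine le_antisymm (ge_of_tendsto (x := atTop) ?_ (.of_forall fun n ↦ hpow n i)) (hN i)
  simpa using (tendsto_pow_atTop_nhds_zero_of_lt_one hε₀ hε₁).mul_const M

theorem eq_zero_of_le_setIntegral_of_le_mul {X : Type*} [MeasurableSpace X] {μ : Measure X}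
    {N G K : X → ℝ} {D J₀ : Set X} {J : X → Set X} (hN : ∀ x, 0 ≤ N x) (hG : ∀ x, 0 ≤ G x)
    (hK : ∀ x, 0 ≤ K x) (hGK : ∀ x, G x ≤ K x * N x) (hGi : IntegrableOn G J₀ μ)
    (hKi : IntegrableOn K J₀ μ) (hJ : ∀ x ∈ D, MeasurableSet (J x) ∧ J x ⊆ D ∩ J₀)
    (hNG : ∀ x ∈ D, N x ≤ ∫ t in J x, G t ∂μ) (hε : ∫ t in J₀, K t ∂μ < 1) :
    ∀ x ∈ D, N x = 0 := by
  intro x hx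
  refine eq_zero_of_forall_le_imp_le_mul (N := fun i : D ↦ N i) (M := ∫ t in J₀, G t ∂μ)
    (fun i ↦ hN i) (fun i ↦ ?_) (setIntegral_nonneg_of_ae ?_) hε (fun C hC i ↦ ?_) ⟨x, hx⟩
  · exact (hNG i i.2).trans <| setIntegral_mono_set hGi (.of_forall hG)
      ((hJ i i.2).2.trans inter_subset_right).eventuallyLE
  · exact .of_forall hK
  · obtain ⟨hJm, hJD⟩ := hJ i i.2
    have hC₀ : 0 ≤ C := (hN i).trans (hC i)
    calc N i ≤ ∫ t in J i, G t ∂μ := hNG i i.2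
      _ ≤ ∫ t in J i, K t * C ∂μ :=
        setIntegral_mono_on (hGi.mono_set (hJD.trans inter_subset_right))
          ((hKi.mono_set (hJD.trans inter_subset_right)).mul_const C) hJm fun t ht ↦
            (hGK t).trans (mul_le_mul_of_nonneg_left (hC ⟨t, (hJD ht).1⟩) (hK t))
      _ = (∫ t in J i, K t ∂μ) * C := integral_mul_const C _
      _ ≤ (∫ t in J₀, K t ∂μ) * C := mul_le_mul_of_nonneg_right (setIntegral_mono_set hKi
        (.of_forall hK) (hJD.trans inter_subset_right).eventuallyLE) hC₀

theorem forall_mem_Icc_of_forall_nhdsGT {α : Type*} [ConditionallyCompleteLinearOrder α]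
    [TopologicalSpace α] [OrderTopology α] [DenselyOrdered α] {P : α → Prop} {c d : α}
    (hc : P c) (hleft : ∀ x ∈ Ioc c d, (∀ y ∈ Ico c x, P y) → P x)
    (hright : ∀ x ∈ Ico c d, P x → ∀ᶠ y in 𝓝[>] x, P y) : ∀ x ∈ Icc c d, P x := by
  intro x hx
  set T := {r ∈ Icc c d | ∀ y ∈ Icc c r, P y}
  have hcT : c ∈ T := ⟨⟨le_rfl, hx.1.trans hx.2⟩, fun y hy ↦ le_antisymm hy.2 hy.1 ▸ hc⟩
  have hTbdd : BddAbove T := ⟨d, fun r hr ↦ hr.1.2⟩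
  set t := sSup T
  have hct : c ≤ t := le_csSup hTbdd hcT
  have htd : t ≤ d := csSup_le ⟨c, hcT⟩ fun r hr ↦ hr.1.2
  have hlt : ∀ y ∈ Ico c t, P y := fun y hy ↦ by
    obtain ⟨r, hrT, hyr⟩ := exists_lt_of_lt_csSup ⟨c, hcT⟩ hy.2
    exact hrT.2 y ⟨hy.1, hyr.le⟩
  have ht : P t := hct.eq_or_lt.elim (fun h ↦ h ▸ hc) fun h ↦ hleft t ⟨h, htd⟩ hlt
  have hle : ∀ y ∈ Icc c t, P y := fun y hy ↦ hy.2.eq_or_lt.elim (· ▸ ht) fun h ↦ hlt y ⟨hy.1, h⟩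
  rcases htd.eq_or_lt with htd | htd
  · exact hle x (htd ▸ hx)
  obtain ⟨u, htu, hu⟩ := (mem_nhdsGT_iff_exists_Ioo_subset' htd).1 (hright t ⟨hct, htd⟩ ht)
  obtain ⟨z, htz, hzu⟩ := exists_between (lt_min htu htd)
  have hzT : z ∈ T := ⟨⟨hct.trans htz.le, hzu.le.trans (min_le_right _ _)⟩, fun y hy ↦
    (le_or_gt y t).elim (fun h ↦ hle y ⟨hy.1, h⟩)
      fun h ↦ hu ⟨h, hy.2.trans_lt (hzu.trans_le (min_le_left _ _))⟩⟩
  exact absurd (le_csSup hTbdd hzT) htz.not_ge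

theorem forall_mem_Icc_of_forall_nhdsLT {α : Type*} [ConditionallyCompleteLinearOrder α]
    [TopologicalSpace α] [OrderTopology α] [DenselyOrdered α] {P : α → Prop} {c d : α}
    (hd : P d) (hright : ∀ x ∈ Ico c d, (∀ y ∈ Ioc x d, P y) → P x)
    (hleft : ∀ x ∈ Ioc c d, P x → ∀ᶠ y in 𝓝[<] x, P y) : ∀ x ∈ Icc c d, P x := fun x hx ↦
  forall_mem_Icc_of_forall_nhdsGT (α := αᵒᵈ) (P := fun x ↦ P (OrderDual.ofDual x))
    (c := OrderDual.toDual d) (d := OrderDual.toDual c) hd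
    (fun x hx hy ↦ hright x ⟨hx.2, hx.1⟩ fun y hy' ↦ hy y ⟨hy'.2, hy'.1⟩)
    (fun x hx hPx ↦ hleft x ⟨hx.2, hx.1⟩ hPx) x ⟨hx.2, hx.1⟩

theorem setOf_clusterPt_mem {X : Type*} [TopologicalSpace X] [HereditarilyLindelofSpace X]
    (F : Filter X) [CountableInterFilter F] : {x | ClusterPt x F} ∈ F := by
  by_contra hF
  have : (F ⊓ 𝓟 {x | ClusterPt x F}ᶜ).NeBot := by
    rwa [neBot_iff, ne_eq, ← mem_iff_inf_principal_compl]
  obtain ⟨x, hx, hcl⟩ := HereditarilyLindelofSpace.isLindelof {x | ClusterPt x F}ᶜ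
    (f := F ⊓ 𝓟 {x | ClusterPt x F}ᶜ) inf_le_right
  exact hx hcl.of_inf_left

theorem neBot_inf_of_neBot_sup_inf {α : Type*} {l₁ l₂ F : Filter α}
    (h : ((l₁ ⊔ l₂) ⊓ F).NeBot) (h₂ : Disjoint l₂ F) : (l₁ ⊓ F).NeBot := by
  rwa [inf_sup_right, disjoint_iff.1 h₂, sup_bot_eq] at h

theorem neBot_nhdsLT_inf_of_Ioo_subset {F : Filter ℝ} {x z : ℝ} (hxz : x < z)
    (h : Ioo x z ⊆ {r | ClusterPt r F}) : (𝓝[<] z ⊓ F).NeBot := by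
  refine inf_neBot_iff.2 fun U hU V hV ↦ ?_
  obtain ⟨w, hwz, hw⟩ := mem_nhdsLT_iff_exists_Ioo_subset.1 hU
  obtain ⟨m, hm, hmz⟩ := exists_between (max_lt hwz hxz)
  have hIoo : Ioo (max w x) z ⊆ Ioo x z := Ioo_subset_Ioo_left (le_max_right _ _)
  refine (clusterPt_iff_nonempty.1 (h (hIoo ⟨hm, hmz⟩)) (isOpen_Ioo.mem_nhds ⟨hm, hmz⟩) hV).mono
    (inter_subset_inter_left _ fun r hr ↦ hw ⟨(le_max_left _ _).trans_lt hr.1, hr.2⟩)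

structure IsPrimitive (a b : ℝ) (ω : Measure ℝ) (g F : ℝ → ℂ) : Prop where
  locInt : LocInt a b ω g
  eq_add : ∀ α ∈ Ioo a b, ∀ β ∈ Ioo a b, α ≤ β → F β = F α + ∫ t in Ico α β, g t ∂ω

namespace IsPrimitive

variable {a b x : ℝ} {ω : Measure ℝ} {g F : ℝ → ℂ}

theorem norm_sub_le (hF : IsPrimitive a b ω g F) {α β : ℝ} (hα : α ∈ Ioo a b) (hβ : β ∈ Ioo a b)
    (hαβ : α ≤ β) : ‖F β - F α‖ ≤ ∫ t in Ico α β, ‖g t‖ ∂ω := by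
  rw [hF.eq_add α hα β hβ hαβ, add_sub_cancel_left]
  exact norm_integral_le_integral_norm _

theorem tendsto_nhdsLT (hF : IsPrimitive a b ω g F) (hx : x ∈ Ioo a b) :
    Tendsto F (𝓝[<] x) (𝓝 (F x)) := by
  obtain ⟨e, hae, hex⟩ := exists_between hx.1
  have hlim := (tendsto_setIntegral_Ico_nhdsLT hex
    (hF.locInt e ⟨hae, hex.trans hx.2⟩ x hx)).const_sub (F x)
  rw [sub_zero] at hlim
  refine hlim.congr' ?_
  filter_upwards [Ioo_mem_nhdsLT hex] with s hs
  rw [hF.eq_add s ⟨hae.trans hs.1, hs.2.trans hx.2⟩ x hx hs.2.le, add_sub_cancel_right]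

theorem tendsto_nhdsGT (hF : IsPrimitive a b ω g F) (hx : x ∈ Ioo a b) :
    Tendsto F (𝓝[>] x) (𝓝 (F x + ω.real {x} • g x)) := by
  obtain ⟨d, hxd, hdb⟩ := exists_between hx.2
  have hlim := (tendsto_setIntegral_Ioo_nhdsGT hxd
    (hF.locInt x hx d ⟨hx.1.trans hxd, hdb⟩)).const_add (F x + ω.real {x} • g x)
  rw [add_zero] at hlim
  refine hlim.congr' ?_
  filter_upwards [Ioo_mem_nhdsGT hxd] with s hs
  have hs' : s ∈ Ioo a b := ⟨hx.1.trans hs.1, hs.2.trans hdb⟩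
  rw [hF.eq_add x hx s hs' hs.1.le, ← Ioo_union_left hs.1,
    setIntegral_union (disjoint_singleton_right.2 (fun h ↦ h.1.false)) (measurableSet_singleton x)
      ((hF.locInt x hx s hs').mono_set Ioo_subset_Ico_self)
      ((hF.locInt x hx s hs').mono_set (singleton_subset_iff.2 ⟨le_rfl, hs.1⟩)),
    integral_singleton]
  ring

end IsPrimitive

-- `u ∈ 𝔇_τ` with `τ u = 0` and quasi-derivative `u^{[1]} = v`.
structure IsHomSol (a b : ℝ) (ω : Measure ℝ) (σf χf u v : ℝ → ℂ) : Prop where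
  fst : IsPrimitive a b ω (fun t ↦ v t * σf t) u
  snd : IsPrimitive a b ω (fun t ↦ u t * χf t) v

namespace IsHomSol

variable {a b x : ℝ} {ω : Measure ℝ} {σf χf u v : ℝ → ℂ}

theorem norm_sub_add_norm_sub_le (hY : IsHomSol a b ω σf χf u v) {α β : ℝ} (hα : α ∈ Ioo a b)
    (hβ : β ∈ Ioo a b) (hαβ : α ≤ β) :
    ‖u β - u α‖ + ‖v β - v α‖ ≤ ∫ t in Ico α β, (‖v t * σf t‖ + ‖u t * χf t‖) ∂ω := by
  rw [integral_add (hY.fst.locInt α hα β hβ).norm (hY.snd.locInt α hα β hβ).norm]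
  exact add_le_add (hY.fst.norm_sub_le hα hβ hαβ) (hY.snd.norm_sub_le hα hβ hαβ)

theorem eventually_nhdsGT_eq_zero (hY : IsHomSol a b ω σf χf u v) (hσ : LocInt a b ω σf)
    (hχ : LocInt a b ω χf) (hx : x ∈ Ioo a b) (h₀ : u x = 0 ∧ v x = 0) :
    ∀ᶠ s in 𝓝[>] x, u s = 0 ∧ v s = 0 := by
  obtain ⟨d, hxd, hdb⟩ := exists_between hx.2
  have hd : d ∈ Ioo a b := ⟨hx.1.trans hxd, hdb⟩
  have hK : IntegrableOn (fun t ↦ ‖σf t‖ + ‖χf t‖) (Ico x d) ω :=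
    (hσ x hx d hd).norm.add (hχ x hx d hd).norm
  have hG : IntegrableOn (fun t ↦ ‖v t * σf t‖ + ‖u t * χf t‖) (Ico x d) ω :=
    (hY.fst.locInt x hx d hd).norm.add (hY.snd.locInt x hx d hd).norm
  obtain ⟨s₁, hε, hs₁⟩ := (((tendsto_setIntegral_Ioo_nhdsGT hxd hK).eventually
    (gt_mem_nhds one_pos)).and (Ioo_mem_nhdsGT hxd)).exists
  have hsub : Ioo x s₁ ⊆ Ico x d := Ioo_subset_Ico_self.trans (Ico_subset_Ico_right hs₁.2.le)
  -- Integrating over `Ioo x r` instead of `Ico x r` discards a possible atom at `x`, where the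
  -- integrand vanishes anyway.
  have hzero := eq_zero_of_le_setIntegral_of_le_mul (μ := ω) (N := fun t ↦ ‖u t‖ + ‖v t‖)
    (D := Ico x s₁) (J₀ := Ioo x s₁) (J := Ioo x) (fun _ ↦ by positivity) (fun _ ↦ by positivity)
    (fun _ ↦ by positivity) (fun t ↦ ?_) (hG.mono_set hsub) (hK.mono_set hsub)
    (fun r hr ↦ ⟨measurableSet_Ioo, fun t ht ↦ ⟨⟨ht.1.le, ht.2.trans hr.2⟩, ht.1, ht.2.trans hr.2⟩⟩)
    (fun r hr ↦ ?_) hε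
  · filter_upwards [Ioo_mem_nhdsGT hs₁.1] with s hs
    simpa [add_eq_zero_iff_of_nonneg] using hzero s ⟨hs.1.le, hs.2⟩
  · simp only [norm_mul]
    nlinarith [norm_nonneg (u t), norm_nonneg (v t), norm_nonneg (σf t), norm_nonneg (χf t)]
  · have hbound := hY.norm_sub_add_norm_sub_le hx
      ⟨hx.1.trans_le hr.1, (hr.2.trans hs₁.2).trans hdb⟩ hr.1
    rw [h₀.1, h₀.2, sub_zero, sub_zero] at hbound
    rwa [← setIntegral_eq_of_subset_of_forall_sdiff_eq_zero measurableSet_Ico Ioo_subset_Ico_self]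
    rintro t ⟨ht, ht'⟩
    obtain rfl : t = x := by_contra fun h ↦ ht' ⟨lt_of_le_of_ne ht.1 (Ne.symm h), ht.2⟩
    simp [h₀.1, h₀.2]

theorem eventually_nhdsLT_eq_zero (hY : IsHomSol a b ω σf χf u v) (hσ : LocInt a b ω σf)
    (hχ : LocInt a b ω χf) (hx : x ∈ Ioo a b) (h₀ : u x = 0 ∧ v x = 0) :
    ∀ᶠ s in 𝓝[<] x, u s = 0 ∧ v s = 0 := by
  obtain ⟨e, hae, hex⟩ := exists_between hx.1
  have he : e ∈ Ioo a b := ⟨hae, hex.trans hx.2⟩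
  have hK : IntegrableOn (fun t ↦ ‖σf t‖ + ‖χf t‖) (Ico e x) ω :=
    (hσ e he x hx).norm.add (hχ e he x hx).norm
  have hG : IntegrableOn (fun t ↦ ‖v t * σf t‖ + ‖u t * χf t‖) (Ico e x) ω :=
    (hY.fst.locInt e he x hx).norm.add (hY.snd.locInt e he x hx).norm
  obtain ⟨s₁, hε, hs₁⟩ := (((tendsto_setIntegral_Ico_nhdsLT hex hK).eventually
    (gt_mem_nhds one_pos)).and (Ioo_mem_nhdsLT hex)).exists
  have hsub : Ico s₁ x ⊆ Ico e x := Ico_subset_Ico_left hs₁.1.le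
  have hzero := eq_zero_of_le_setIntegral_of_le_mul (μ := ω) (N := fun t ↦ ‖u t‖ + ‖v t‖)
    (D := Ioc s₁ x) (J₀ := Ico s₁ x) (J := fun r ↦ Ico r x) (fun _ ↦ by positivity)
    (fun _ ↦ by positivity) (fun _ ↦ by positivity) (fun t ↦ ?_) (hG.mono_set hsub)
    (hK.mono_set hsub) (fun r hr ↦ ⟨measurableSet_Ico, fun t ht ↦
      ⟨⟨hr.1.trans_le ht.1, ht.2.le⟩, hr.1.le.trans ht.1, ht.2⟩⟩) (fun r hr ↦ ?_) hε
  · filter_upwards [Ioo_mem_nhdsLT hs₁.2] with s hs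
    simpa [add_eq_zero_iff_of_nonneg] using hzero s ⟨hs.1, hs.2.le⟩
  · simp only [norm_mul]
    nlinarith [norm_nonneg (u t), norm_nonneg (v t), norm_nonneg (σf t), norm_nonneg (χf t)]
  · have hbound := hY.norm_sub_add_norm_sub_le ⟨hae.trans (hs₁.1.trans hr.1), hr.2.trans_lt hx.2⟩
      hx hr.2
    rwa [h₀.1, h₀.2, zero_sub, zero_sub, norm_neg, norm_neg] at hbound

theorem eq_zero_of_eventually_nhdsLT (hY : IsHomSol a b ω σf χf u v) (hx : x ∈ Ioo a b)
    (h : ∀ᶠ s in 𝓝[<] x, u s = 0 ∧ v s = 0) : u x = 0 ∧ v x = 0 :=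
  ⟨tendsto_nhds_unique (hY.fst.tendsto_nhdsLT hx)
      (tendsto_const_nhds.congr' (h.mono fun _ h ↦ h.1.symm)),
    tendsto_nhds_unique (hY.snd.tendsto_nhdsLT hx)
      (tendsto_const_nhds.congr' (h.mono fun _ h ↦ h.2.symm))⟩

theorem eq_zero_of_eventually_nhdsGT {ρf : ℝ → ℂ} (hY : IsHomSol a b ω σf χf u v)
    (hatoms : NoCommonAtoms a b ω σf χf ρf) (hx : x ∈ Ioo a b)
    (h : ∀ᶠ s in 𝓝[>] x, u s = 0 ∧ v s = 0) : u x = 0 ∧ v x = 0 := by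
  have hu : u x + ω.real {x} • (v x * σf x) = 0 := tendsto_nhds_unique (hY.fst.tendsto_nhdsGT hx)
    (tendsto_const_nhds.congr' (h.mono fun _ h ↦ h.1.symm))
  have hv : v x + ω.real {x} • (u x * χf x) = 0 := tendsto_nhds_unique (hY.snd.tendsto_nhdsGT hx)
    (tendsto_const_nhds.congr' (h.mono fun _ h ↦ h.2.symm))
  have hσχ := (hatoms x hx).2
  rw [Complex.real_smul, measureReal_def] at hu hv
  set m : ℂ := ((ω {x}).toReal : ℂ)
  have hux : u x = 0 := by linear_combination hu - m * σf x * hv + u x * hσχ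
  exact ⟨hux, by linear_combination hv - m * χf x * hux⟩

theorem eq_zero_of_eq_zero {ρf : ℝ → ℂ} (hY : IsHomSol a b ω σf χf u v) (hσ : LocInt a b ω σf)
    (hχ : LocInt a b ω χf) (hatoms : NoCommonAtoms a b ω σf χf ρf) {c : ℝ} (hc : c ∈ Ioo a b)
    (h₀ : u c = 0 ∧ v c = 0) (hx : x ∈ Ioo a b) : u x = 0 ∧ v x = 0 := by
  rcases le_total c x with hcx | hxc
  · refine forall_mem_Icc_of_forall_nhdsGT (P := fun y ↦ u y = 0 ∧ v y = 0) h₀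
      (fun y hy hPy ↦ ?_) (fun y hy hPy ↦ ?_) x ⟨hcx, le_rfl⟩
    · exact hY.eq_zero_of_eventually_nhdsLT ⟨hc.1.trans hy.1, hy.2.trans_lt hx.2⟩
        (mem_of_superset (Ico_mem_nhdsLT hy.1) hPy)
    · exact hY.eventually_nhdsGT_eq_zero hσ hχ ⟨hc.1.trans_le hy.1, hy.2.trans hx.2⟩ hPy
  · refine forall_mem_Icc_of_forall_nhdsLT (P := fun y ↦ u y = 0 ∧ v y = 0) h₀
      (fun y hy hPy ↦ ?_) (fun y hy hPy ↦ ?_) x ⟨le_rfl, hxc⟩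
    · exact hY.eq_zero_of_eventually_nhdsGT hatoms ⟨hx.1.trans_le hy.1, hy.2.trans hc.2⟩
        (mem_of_superset (Ioc_mem_nhdsGT hy.2) hPy)
    · exact hY.eventually_nhdsLT_eq_zero hσ hχ ⟨hx.1.trans hy.1, hy.2.trans_lt hc.2⟩ hPy

end IsHomSol

theorem SuppFull.exists_setIntegral_Ico_ne_zero {a b : ℝ} {ω : Measure ℝ} {σf : ℝ → ℂ}
    (hsupp : SuppFull a b ω σf) (hσ : LocInt a b ω σf) {s₀ s₁ : ℝ} (hs₀ : s₀ ∈ Ioo a b)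
    (hs₁ : s₁ ∈ Ioo a b) (h : s₀ < s₁) :
    ∃ r r', s₀ ≤ r ∧ r < r' ∧ r' ≤ s₁ ∧ ∫ t in Ico r r', σf t ∂ω ≠ 0 := by
  by_contra! H
  have hzero : σf =ᵐ[ω.restrict (Ico s₀ s₁)] 0 := by
    refine ae_eq_zero_of_forall_setIntegral_Ico_eq_zero (hσ s₀ hs₀ s₁ hs₁)
      (H s₀ s₁ le_rfl h le_rfl) fun r r' _ ↦ ?_
    rw [Measure.restrict_restrict measurableSet_Ico, Ico_inter_Ico]
    rcases lt_or_ge (max r s₀) (min r' s₁) with hlt | hge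
    · exact H _ _ (le_max_right _ _) hlt (min_le_right _ _)
    · rw [Ico_eq_empty hge.not_gt, setIntegral_empty]
  exact hsupp s₀ hs₀ s₁ hs₁ h (integral_eq_zero_of_ae (hzero.mono fun t ht ↦ by simp [ht]))

theorem IsHomSol.exists_eq_zero_of_eqOn_zero {a b s t : ℝ} {ω : Measure ℝ} {σf χf u v : ℝ → ℂ}
    (hY : IsHomSol a b ω σf χf u v) (hσ : LocInt a b ω σf) (hsupp : SuppFull a b ω σf)
    (hs : s ∈ Ioo a b) (ht : t ∈ Ioo a b) (hst : s < t) (hu : ∀ r ∈ Ioo s t, u r = 0) :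
    ∃ c ∈ Ioo a b, u c = 0 ∧ v c = 0 := by
  obtain ⟨c, hsc, hct⟩ := exists_between hst
  obtain ⟨t', hct', ht't⟩ := exists_between hct
  have hmem : ∀ r ∈ Icc c t', r ∈ Ioo s t := fun r hr ↦ ⟨hsc.trans_le hr.1, hr.2.trans_lt ht't⟩
  have hab : ∀ r ∈ Ioo s t, r ∈ Ioo a b := fun r hr ↦ ⟨hs.1.trans hr.1, hr.2.trans ht.2⟩
  refine ⟨c, hab c (hmem c ⟨le_rfl, hct'.le⟩), hu c (hmem c ⟨le_rfl, hct'.le⟩), ?_⟩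
  by_contra hvc
  have hv : ∀ r ∈ Icc c t', v r = v c := fun r hr ↦ by
    rw [hY.snd.eq_add c (hab c (hmem c ⟨le_rfl, hct'.le⟩)) r (hab r (hmem r hr)) hr.1,
      setIntegral_eq_zero_of_forall_eq_zero fun x hx ↦ ?_, add_zero]
    rw [hu x (hmem x ⟨hx.1, hx.2.le.trans hr.2⟩), zero_mul]
  obtain ⟨r, r', hcr, hrr', hr't', hne⟩ := hsupp.exists_setIntegral_Ico_ne_zero hσ
    (hab c (hmem c ⟨le_rfl, hct'.le⟩)) (hab t' (hmem t' ⟨hct'.le, le_rfl⟩)) hct'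
  have hr : r ∈ Icc c t' := ⟨hcr, hrr'.le.trans hr't'⟩
  have hr' : r' ∈ Icc c t' := ⟨hcr.trans hrr'.le, hr't'⟩
  have heq := hY.fst.eq_add r (hab r (hmem r hr)) r' (hab r' (hmem r' hr')) hrr'.le
  rw [hu r' (hmem r' hr'), hu r (hmem r hr), zero_add,
    setIntegral_congr_fun measurableSet_Ico fun x hx ↦ by
      rw [hv x ⟨hcr.trans hx.1, hx.2.le.trans hr't'⟩], integral_const_mul] at heq
  exact mul_ne_zero hvc hne heq.symm

-- The filter of `ϱ`-almost-everywhere statements on `(a,b)`; its cluster points form `supp ϱ`.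
def rhoAE (a b : ℝ) (ω : Measure ℝ) (ρf : ℝ → ℂ) : Filter ℝ :=
  ae ω ⊓ 𝓟 {t | t ∈ Ioo a b ∧ ρf t ≠ 0}

instance (a b : ℝ) (ω : Measure ℝ) (ρf : ℝ → ℂ) : CountableInterFilter (rhoAE a b ω ρf) := by
  unfold rhoAE
  infer_instance

section Rho

variable {a b x : ℝ} {ω : Measure ℝ} {σf χf ρf : ℝ → ℂ}

theorem eventually_rhoAE_iff {p : ℝ → Prop} :
    (∀ᶠ t in rhoAE a b ω ρf, p t) ↔ ∀ᵐ t ∂ω, t ∈ Ioo a b → ρf t = 0 ∨ p t := by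
  refine eventually_inf_principal.trans (eventually_congr (.of_forall fun t ↦ ?_))
  simp only [mem_ofPred_eq, and_imp]
  tauto

theorem inSuppRho_iff_clusterPt : InSuppRho a b ω ρf x ↔ ClusterPt x (rhoAE a b ω ρf) := by
  rw [clusterPt_iff_not_disjoint, (nhds_basis_Ioo_pos x).disjoint_iff_left]
  simp only [InSuppRho, not_exists, not_and]
  refine forall₂_congr fun ε _ ↦ not_congr ?_
  rw [← eventually_mem_set, eventually_rhoAE_iff]
  refine eventually_congr (.of_forall fun t ↦ ?_)
  simp only [mem_compl_iff, and_imp]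
  tauto

theorem InDom.sub {f f1 fτ g g1 gτ : ℝ → ℂ} (hf : InDom a b ω σf χf ρf f f1 fτ)
    (hg : InDom a b ω σf χf ρf g g1 gτ) : InDom a b ω σf χf ρf (f - g) (f1 - g1) (fτ - gτ) := by
  obtain ⟨hf₁, hf₂, hf₃⟩ := hf
  obtain ⟨hg₁, hg₂, hg₃⟩ := hg
  refine ⟨fun α hα β hβ ↦ ?_, fun α hα β hβ ↦ ?_, fun α hα β hβ hαβ ↦ ⟨?_, ?_⟩⟩
  · exact ((hf₁ α hα β hβ).sub (hg₁ α hα β hβ)).congr_fun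
      (fun t _ ↦ by simp only [Pi.sub_apply]; ring) measurableSet_Ico
  · exact ((hf₂ α hα β hβ).sub (hg₂ α hα β hβ)).congr_fun
      (fun t _ ↦ by simp only [Pi.sub_apply]; ring) measurableSet_Ico
  · have hI : ∫ t in Ico α β, (f1 - g1) t * σf t ∂ω
        = (∫ t in Ico α β, f1 t * σf t ∂ω) - ∫ t in Ico α β, g1 t * σf t ∂ω := by
      rw [← integral_sub (hf₁ α hα β hβ) (hg₁ α hα β hβ)]
      simp only [Pi.sub_apply, sub_mul]
    rw [hI, Pi.sub_apply, Pi.sub_apply, (hf₃ α hα β hβ hαβ).1, (hg₃ α hα β hβ hαβ).1]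
    ring
  · have hI : ∫ t in Ico α β, ((f - g) t * χf t - (fτ - gτ) t * ρf t) ∂ω
        = (∫ t in Ico α β, (f t * χf t - fτ t * ρf t) ∂ω)
          - ∫ t in Ico α β, (g t * χf t - gτ t * ρf t) ∂ω := by
      rw [← integral_sub (hf₂ α hα β hβ) (hg₂ α hα β hβ)]
      congr 1 with t
      simp only [Pi.sub_apply]
      ring
    rw [hI, Pi.sub_apply, Pi.sub_apply, (hf₃ α hα β hβ hαβ).2, (hg₃ α hα β hβ hαβ).2]
    ring

theorem InDom.isPrimitive {f f1 fτ : ℝ → ℂ} (hdom : InDom a b ω σf χf ρf f f1 fτ) :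
    IsPrimitive a b ω (fun t ↦ f1 t * σf t) f :=
  ⟨hdom.1, fun α hα β hβ hαβ ↦ (hdom.2.2 α hα β hβ hαβ).1⟩

theorem InDom.isHomSol {f f1 fτ : ℝ → ℂ} (hdom : InDom a b ω σf χf ρf f f1 fτ)
    (hτ : ∀ᶠ t in rhoAE a b ω ρf, fτ t = 0) : IsHomSol a b ω σf χf f f1 := by
  have hae : ∀ α ∈ Ioo a b, ∀ β ∈ Ioo a b, (fun t ↦ f t * χf t - fτ t * ρf t)
      =ᵐ[ω.restrict (Ico α β)] fun t ↦ f t * χf t := fun α hα β hβ ↦ by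
    filter_upwards [ae_restrict_of_ae (eventually_rhoAE_iff.1 hτ),
      ae_restrict_mem measurableSet_Ico] with t ht htI
    rcases ht ⟨hα.1.trans_le htI.1, htI.2.trans hβ.2⟩ with h | h <;> simp [h]
  refine ⟨hdom.isPrimitive,
    ⟨fun α hα β hβ ↦ (hdom.2.1 α hα β hβ).congr (hae α hα β hβ), fun α hα β hβ hαβ ↦ ?_⟩⟩
  rw [(hdom.2.2 α hα β hβ hαβ).2, integral_congr_ae (hae α hα β hβ)]

theorem IsPrimitive.eq_zero_of_neBot_nhdsLE {g F : ℝ → ℂ} (hF : IsPrimitive a b ω g F)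
    (hF₀ : ∀ᶠ t in rhoAE a b ω ρf, F t = 0) (hx : x ∈ Ioo a b)
    (h : (𝓝[≤] x ⊓ rhoAE a b ω ρf).NeBot) : F x = 0 :=
  tendsto_nhds_unique_of_frequently_eq (continuousWithinAt_Iio_iff_Iic.1 (hF.tendsto_nhdsLT hx))
    tendsto_const_nhds (inf_neBot_iff_frequently_right.1 h hF₀)

theorem IsPrimitive.add_jump_eq_zero_of_neBot_nhdsGE {f f1 : ℝ → ℂ}
    (hF : IsPrimitive a b ω (fun t ↦ f1 t * σf t) f) (hf₀ : ∀ᶠ t in rhoAE a b ω ρf, f t = 0)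
    (hatoms : NoCommonAtoms a b ω σf χf ρf) (hx : x ∈ Ioo a b)
    (h : (𝓝[≥] x ⊓ rhoAE a b ω ρf).NeBot) : f x + ω.real {x} • (f1 x * σf x) = 0 := by
  rw [← nhdsGT_sup_nhdsWithin_singleton, nhdsWithin_singleton, inf_sup_right, sup_neBot] at h
  rcases h with h | h
  · exact tendsto_nhds_unique_of_frequently_eq (hF.tendsto_nhdsGT hx) tendsto_const_nhds
      (inf_neBot_iff_frequently_right.1 h hf₀)
  obtain ⟨hfx, -, hρx⟩ := frequently_pure.1 (inf_neBot_iff_frequently_right.1 h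
    (hf₀.and (mem_inf_of_right (mem_principal_self _))))
  rw [hfx, zero_add, Complex.real_smul, measureReal_def]
  rcases mul_eq_zero.1 (hatoms x hx).1 with hσ | hρ
  · linear_combination f1 x * hσ
  · simp [(mul_eq_zero.1 hρ).resolve_right hρx]

theorem InDom.eqOn_zero_of_gap {f f1 fτ : ℝ → ℂ} (hgap : GapCondition a b ω σf χf ρf)
    (hatoms : NoCommonAtoms a b ω σf χf ρf) (hdom : InDom a b ω σf χf ρf f f1 fτ)
    (hf₀ : ∀ᶠ t in rhoAE a b ω ρf, f t = 0) {α β : ℝ} (hα : α ∈ Ioo a b) (hβ : β ∈ Ioo a b)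
    (hαβ : α < β) (hαc : ClusterPt α (rhoAE a b ω ρf)) (hβc : ClusterPt β (rhoAE a b ω ρf))
    (hgapc : ∀ r ∈ Ioo α β, ¬ ClusterPt r (rhoAE a b ω ρf)) : ∀ r ∈ Ioo α β, f r = 0 := by
  have hF := hdom.isPrimitive
  have hnull : (Ioo α β)ᶜ ∈ rhoAE a b ω ρf :=
    mem_of_superset (setOf_clusterPt_mem _) fun r hr hr' ↦ hgapc r hr' hr
  have hleft : Tendsto f (𝓝[<] α) (𝓝 0) := by
    have hα₀ := hF.eq_zero_of_neBot_nhdsLE hf₀ hα <| neBot_inf_of_neBot_sup_inf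
      (by rwa [nhdsLE_sup_nhdsGT])
      (disjoint_of_disjoint_of_mem disjoint_compl_right (Ioo_mem_nhdsGT hαβ) hnull)
    simpa [hα₀] using hF.tendsto_nhdsLT hα
  have hright : Tendsto f (𝓝[>] β) (𝓝 0) := by
    have hβ₀ := hF.add_jump_eq_zero_of_neBot_nhdsGE hf₀ hatoms hβ <| neBot_inf_of_neBot_sup_inf
      (by rwa [sup_comm, nhdsLT_sup_nhdsGE])
      (disjoint_of_disjoint_of_mem disjoint_compl_right (Ioo_mem_nhdsLT hαβ) hnull)
    simpa only [hβ₀] using hF.tendsto_nhdsGT hβ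
  refine hgap α hα β hβ hαβ ?_ (inSuppRho_iff_clusterPt.2 hαc) (inSuppRho_iff_clusterPt.2 hβc)
    f f1 fτ hdom hleft hright
  filter_upwards [eventually_rhoAE_iff.1 hnull] with t ht htI
  exact (ht ⟨hα.1.trans htI.1, htI.2.trans hβ.2⟩).resolve_right (not_not.2 htI)

theorem InDom.exists_eqOn_zero {f f1 fτ : ℝ → ℂ} (hgap : GapCondition a b ω σf χf ρf)
    (hatoms : NoCommonAtoms a b ω σf χf ρf) (hdom : InDom a b ω σf χf ρf f f1 fτ)
    (hf₀ : ∀ᶠ t in rhoAE a b ω ρf, f t = 0) {x y : ℝ} (hx : x ∈ Ioo a b) (hy : y ∈ Ioo a b)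
    (hxy : x < y) (hxc : ClusterPt x (rhoAE a b ω ρf)) (hyc : ClusterPt y (rhoAE a b ω ρf)) :
    ∃ s t, s ∈ Ioo a b ∧ t ∈ Ioo a b ∧ s < t ∧ ∀ r ∈ Ioo s t, f r = 0 := by
  set P := {r | ClusterPt r (rhoAE a b ω ρf)}
  by_cases hsub : Ioo x y ⊆ P
  · refine ⟨x, y, hx, hy, hxy, fun z hz ↦ hdom.isPrimitive.eq_zero_of_neBot_nhdsLE hf₀
      ⟨hx.1.trans hz.1, hz.2.trans hy.2⟩ ?_⟩
    exact (neBot_nhdsLT_inf_of_Ioo_subset hz.1 ((Ioo_subset_Ioo_right hz.2.le).trans hsub)).mono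
      (inf_le_inf_right _ (nhdsWithin_mono _ Iio_subset_Iic_self))
  obtain ⟨m, hm, hmP⟩ := not_subset.1 hsub
  have hPc : IsClosed P := isClosed_setOfPred_clusterPt
  have hαmem : sSup (P ∩ Icc x m) ∈ P ∩ Icc x m := (hPc.inter isClosed_Icc).csSup_mem
    ⟨x, hxc, le_rfl, hm.1.le⟩ (bddAbove_Icc.mono inter_subset_right)
  have hβmem : sInf (P ∩ Icc m y) ∈ P ∩ Icc m y := (hPc.inter isClosed_Icc).csInf_mem
    ⟨y, hyc, hm.2.le, le_rfl⟩ (bddBelow_Icc.mono inter_subset_right)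
  -- `(α, β)` is the gap of `supp ϱ` containing `m`.
  set α := sSup (P ∩ Icc x m)
  set β := sInf (P ∩ Icc m y)
  have hαm : α < m := hαmem.2.2.lt_of_ne fun h ↦ hmP (h ▸ hαmem.1)
  have hmβ : m < β := hβmem.2.1.lt_of_ne fun h ↦ hmP (h ▸ hβmem.1)
  have hα : α ∈ Ioo a b := ⟨hx.1.trans_le hαmem.2.1, hαm.trans (hm.2.trans hy.2)⟩
  have hβ : β ∈ Ioo a b := ⟨(hx.1.trans hm.1).trans hmβ, hβmem.2.2.trans_lt hy.2⟩
  refine ⟨α, β, hα, hβ, hαm.trans hmβ, hdom.eqOn_zero_of_gap hgap hatoms hf₀ hα hβ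
    (hαm.trans hmβ) hαmem.1 hβmem.1 fun r hr hrP ↦ ?_⟩
  rcases le_total r m with hrm | hmr
  · exact (le_csSup (bddAbove_Icc.mono inter_subset_right)
      (show r ∈ P ∩ Icc x m from ⟨hrP, hαmem.2.1.trans hr.1.le, hrm⟩)).not_gt hr.1
  · exact (csInf_le (bddBelow_Icc.mono inter_subset_right)
      (show r ∈ P ∩ Icc m y from ⟨hrP, hmr, hr.2.le.trans hβmem.2.2⟩)).not_gt hr.2

theorem InDom.eq_zero {f f1 fτ : ℝ → ℂ} (hσ : LocInt a b ω σf) (hχ : LocInt a b ω χf)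
    (hsupp : SuppFull a b ω σf) (hatoms : NoCommonAtoms a b ω σf χf ρf)
    (hgap : GapCondition a b ω σf χf ρf) (htwo : SuppRhoTwoPoints a b ω ρf)
    (hdom : InDom a b ω σf χf ρf f f1 fτ) (hf₀ : ∀ᶠ t in rhoAE a b ω ρf, f t = 0)
    (hτ₀ : ∀ᶠ t in rhoAE a b ω ρf, fτ t = 0) : ∀ x ∈ Ioo a b, f x = 0 := by
  obtain ⟨x, hx, y, hy, hxy, hxc, hyc⟩ := htwo
  rw [inSuppRho_iff_clusterPt] at hxc hyc
  obtain ⟨s, t, hs, ht, hst, hzero⟩ : ∃ s t, s ∈ Ioo a b ∧ t ∈ Ioo a b ∧ s < t ∧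
      ∀ r ∈ Ioo s t, f r = 0 := by
    rcases hxy.lt_or_gt with h | h
    · exact hdom.exists_eqOn_zero hgap hatoms hf₀ hx hy h hxc hyc
    · exact hdom.exists_eqOn_zero hgap hatoms hf₀ hy hx h hyc hxc
  have hY := hdom.isHomSol hτ₀
  obtain ⟨c, hc, hc₀⟩ := hY.exists_eq_zero_of_eqOn_zero hσ hsupp hs ht hst hzero
  exact fun z hz ↦ (hY.eq_zero_of_eq_zero hσ hχ hatoms hc hc₀ hz).1

end Rho

theorem stmt10_general (a b : ℝ) (ω : Measure ℝ) (σf χf ρf : ℝ → ℂ)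
    (hσ : LocInt a b ω σf) (hχ : LocInt a b ω χf)
    (hsupp : SuppFull a b ω σf)
    (hatoms : NoCommonAtoms a b ω σf χf ρf)
    (hgapcond : GapCondition a b ω σf χf ρf)
    (htwo : SuppRhoTwoPoints a b ω ρf)
    (f f1 fτ g g1 gτ : ℝ → ℂ)
    (hf : InDom a b ω σf χf ρf f f1 fτ)
    (hg : InDom a b ω σf χf ρf g g1 gτ)
    (hfg : ∀ᵐ t ∂ω, t ∈ Set.Ioo a b → (ρf t = 0 ∨ f t = g t))
    (hfgτ : ∀ᵐ t ∂ω, t ∈ Set.Ioo a b → (ρf t = 0 ∨ fτ t = gτ t)) :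
    ∀ x ∈ Set.Ioo a b, f x = g x := by
  have hdiff {p q : ℝ → ℂ} (h : ∀ᵐ t ∂ω, t ∈ Ioo a b → ρf t = 0 ∨ p t = q t) :
      ∀ᶠ t in rhoAE a b ω ρf, (p - q) t = 0 :=
    eventually_rhoAE_iff.2 (h.mono fun t ht hI ↦ (ht hI).imp_right sub_eq_zero.2)
  intro x hx
  exact sub_eq_zero.1 ((hf.sub hg).eq_zero hσ hχ hsupp hatoms hgapcond htwo (hdiff hfg)
    (hdiff hfgτ) x hx)

/-- Under the full Hypothesis, if `f, g ∈ 𝔇_τ` satisfy `f = g` and `τ f = τ g`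
`ϱ`-almost everywhere, then `f = g` everywhere on `(a,b)`; i.e. the map
`f ↦ (f, τ f)` into `L¹_loc(ϱ) × L¹_loc(ϱ)` is injective. -/
theorem stmt10 (a b : ℝ) (hab : a < b) (ω : Measure ℝ) (σf χf ρf : ℝ → ℂ)
    (hσ : LocInt a b ω σf) (hχ : LocInt a b ω χf) (hρ : LocInt a b ω ρf)
    (hreal : RealCoeffs σf χf ρf)
    (hsupp : SuppFull a b ω σf)
    (hatoms : NoCommonAtoms a b ω σf χf ρf)
    (hgapcond : GapCondition a b ω σf χf ρf)
    (htwo : SuppRhoTwoPoints a b ω ρf)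
    (f f1 fτ g g1 gτ : ℝ → ℂ)
    (hf : InDom a b ω σf χf ρf f f1 fτ)
    (hg : InDom a b ω σf χf ρf g g1 gτ)
    (hfg : ∀ᵐ t ∂ω, t ∈ Set.Ioo a b → (ρf t = 0 ∨ f t = g t))
    (hfgτ : ∀ᵐ t ∂ω, t ∈ Set.Ioo a b → (ρf t = 0 ∨ fτ t = gτ t)) :
    ∀ x ∈ Set.Ioo a b, f x = g x :=
  stmt10_general a b ω σf χf ρf hσ hχ hsupp hatoms hgapcond htwo f f1 fτ g g1 gτ hf hg hfg hfgτ
end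

section
/- Suppose $\tau$ is in the limit-circle case at $a$ and limit-point at $b$, $S$ is a self-adjoint restriction of $T_{max}$ with singular Weyl–Titchmarsh function $M$ defined by requiring $\psi_z = \theta_z + M(z)\phi_z$ to lie in $S$ near $b$, where $\theta_z, \phi_z$ is a real entire fundamental system with $W(\theta_z,\phi_z)=1$, $\phi_z$ lying in $S$ near $a$, and the Wronskian normalizations $W(\theta_{z_1},\phi_{z_2})(a)=1$, $W(\theta_{z_1},\theta_{z_2})(a)=W(\phi_{z_1},\phi_{z_2})(a)=0$ for all $z_1,z_2$. Then for all $z \in \mathbb{C}\setminus\mathbb{R}$: $\|\psi_z\|^2 = \mathrm{Im}(M(z))/\mathrm{Im}(z) > 0$; in particular $M$ is a Herglotz function (maps the upper half-plane analytically to itself). -/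
open MeasureTheory Set

/-- The singular Weyl–Titchmarsh function is Herglotz: with the Weyl solutions `ψ_z`
of a self-adjoint restriction `S` (limit-circle at `a`, limit-point at `b`), one has
`‖ψ_z‖² = Im M(z)/Im z > 0` for all nonreal `z`; in particular `M` maps the upper
half-plane analytically to itself.  The hypotheses encode the available facts: the
Lagrange identity `(z₁-z₂)∫ψ_{z₁}ψ_{z₂} dϱ = M(z₁) - M(z₂)`, the conjugation
symmetries `ψ_{z*} = ψ_z*`, `M(z*) = M(z)*`, square integrability, nontriviality of
the Weyl solutions, and analyticity of `M` off the real axis. -/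
theorem stmt19 (a b : ℝ) (hab : a < b) (ϱ : Measure ℝ)
    (M : ℂ → ℂ) (ψ : ℂ → ℝ → ℂ)
    (hint : ∀ z₁ z₂ : ℂ, z₁.im ≠ 0 → z₂.im ≠ 0 →
      IntegrableOn (fun t => ψ z₁ t * ψ z₂ t) (Set.Ioo a b) ϱ)
    (hlag : ∀ z₁ z₂ : ℂ, z₁.im ≠ 0 → z₂.im ≠ 0 →
      (z₁ - z₂) * ∫ t in Set.Ioo a b, ψ z₁ t * ψ z₂ t ∂ϱ = M z₁ - M z₂)
    (hψconj : ∀ z : ℂ, z.im ≠ 0 → ∀ t, ψ (starRingEnd ℂ z) t = starRingEnd ℂ (ψ z t))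
    (hMconj : ∀ z : ℂ, z.im ≠ 0 → M (starRingEnd ℂ z) = starRingEnd ℂ (M z))
    (hL2 : ∀ z : ℂ, z.im ≠ 0 →
      IntegrableOn (fun t => ‖ψ z t‖ ^ 2) (Set.Ioo a b) ϱ)
    (hnontriv : ∀ z : ℂ, z.im ≠ 0 →
      ¬ (∀ᵐ t ∂(ϱ.restrict (Set.Ioo a b)), ψ z t = 0))
    (hdiff : DifferentiableOn ℂ M {z : ℂ | z.im ≠ 0}) :
    (∀ z : ℂ, z.im ≠ 0 →
      (∫ t in Set.Ioo a b, ‖ψ z t‖ ^ 2 ∂ϱ) = (M z).im / z.im ∧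
      0 < (M z).im / z.im) ∧
    DifferentiableOn ℂ M {z : ℂ | 0 < z.im} ∧
    Set.MapsTo M {z : ℂ | 0 < z.im} {z : ℂ | 0 < z.im} := by
  have key : ∀ z : ℂ, z.im ≠ 0 →
      (∫ t in Set.Ioo a b, ‖ψ z t‖ ^ 2 ∂ϱ) = (M z).im / z.im ∧
      0 < (∫ t in Set.Ioo a b, ‖ψ z t‖ ^ 2 ∂ϱ) := by
    intro z hz
    have hcz : (starRingEnd ℂ z).im ≠ 0 := by
      simpa using neg_ne_zero.mpr hz
    have h1 := hlag z (starRingEnd ℂ z) hz hcz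
    set r : ℝ := ∫ t in Set.Ioo a b, ‖ψ z t‖ ^ 2 ∂ϱ with hr
    have heq : (∫ t in Set.Ioo a b, ψ z t * ψ (starRingEnd ℂ z) t ∂ϱ) = (r : ℂ) := by
      rw [hr]
      have h2 : (fun t => ψ z t * ψ (starRingEnd ℂ z) t)
          =ᵐ[ϱ.restrict (Set.Ioo a b)] fun t => ((‖ψ z t‖ ^ 2 : ℝ) : ℂ) := by
        refine Filter.Eventually.of_forall fun t => ?_
        show ψ z t * ψ (starRingEnd ℂ z) t = ((‖ψ z t‖ ^ 2 : ℝ) : ℂ)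
        rw [hψconj z hz t, Complex.mul_conj]
        norm_cast
        simp [Complex.normSq_eq_norm_sq, sq, Complex.sq_norm]
      rw [integral_congr_ae h2]
      exact integral_ofReal
    rw [heq, hMconj z hz, Complex.sub_conj, Complex.sub_conj] at h1
    have him : z.im * r = (M z).im := by
      have h2 := congrArg Complex.im h1
      simp [Complex.mul_im, Complex.mul_re] at h2
      linarith
    have hnn : (0:ℝ) ≤ r := integral_nonneg fun t => by positivity
    have hrpos : 0 < r := by
      rcases lt_or_eq_of_le hnn with h | h
      · exact h
      · exfalso
        apply hnontriv z hz
        have h0 : (∫ t in Set.Ioo a b, ‖ψ z t‖ ^ 2 ∂ϱ) = 0 := h.symm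
        have := (integral_eq_zero_iff_of_nonneg (fun t => by positivity)
          (hL2 z hz)).mp h0
        filter_upwards [this] with t ht
        simpa [pow_eq_zero_iff] using ht
    refine ⟨?_, ?_⟩
    · rw [← him, mul_comm, mul_div_assoc, div_self hz, mul_one]
    · rw [hr] at hrpos
      exact hrpos
  refine ⟨fun z hz => ⟨(key z hz).1, (key z hz).1 ▸ (key z hz).2⟩, ?_, ?_⟩
  · exact hdiff.mono fun z hz => ne_of_gt hz
  · intro z hz
    have hz' : z.im ≠ 0 := ne_of_gt hz
    have h := key z hz'
    have : 0 < (M z).im / z.im := h.1 ▸ h.2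
    exact (div_pos_iff.mp this).elim (fun h => h.1) (fun h => absurd h.2 (not_lt.mpr hz.le))
end
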